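/- Every equivalence class E of ∼ contains exactly one source tableau. -/

import Mathlib

open Classical

noncomputable section

namespace Genomic

/-- `lam` encodes a partition of `n`: `lam r` is the length of the `r`-th row (rows are
1-based, indexed from the top). -/
def IsPartitionOf (n : ℕ) (lam : ℕ → ℕ) : Prop :=
  (∀ r, 1 ≤ r → lam (r + 1) ≤ lam r) ∧ (∀ r, n < r → lam r = 0) ∧
    (∑ r ∈ Finset.Icc 1 n, lam r) = n

/-- `p = (r, c)` is a box of the Young diagram of `lam` (row `r` from the top,
column `c` from the left, both 1-based). -/
def IsCell (lam : ℕ → ℕ) (p : ℕ × ℕ) : Prop :=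
  1 ≤ p.1 ∧ 1 ≤ p.2 ∧ p.2 ≤ lam p.1

/-- `T` is an increasing gapless tableau of shape `lam` with maximum entry `m`
(normalized to take the value `0` outside the Young diagram). -/
def IsIGLT (lam : ℕ → ℕ) (m : ℕ) (T : ℕ × ℕ → ℕ) : Prop :=
  (∀ p, ¬ IsCell lam p → T p = 0) ∧
  (∀ p, IsCell lam p → 1 ≤ T p ∧ T p ≤ m) ∧
  (∀ r c, IsCell lam (r, c) → IsCell lam (r, c + 1) → T (r, c) < T (r, c + 1)) ∧
  (∀ r c, IsCell lam (r, c) → IsCell lam (r + 1, c) → T (r, c) < T (r + 1, c)) ∧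
  (∀ k, 1 ≤ k → k ≤ m → ∃ p, IsCell lam p ∧ T p = k)

/-- The set of boxes of `T` containing the entry `i`, i.e. `T⁻¹(i)`. -/
def cellsWith (lam : ℕ → ℕ) (T : ℕ × ℕ → ℕ) (i : ℕ) : Set (ℕ × ℕ) :=
  {p | IsCell lam p ∧ T p = i}

def rowSet (lam : ℕ → ℕ) (T : ℕ × ℕ → ℕ) (i : ℕ) : Set ℕ :=
  {r | ∃ c, IsCell lam (r, c) ∧ T (r, c) = i}

/-- The row `r_t^{(i)}` of `Top_i(T)`. -/
def rtop (lam : ℕ → ℕ) (T : ℕ × ℕ → ℕ) (i : ℕ) : ℕ := sInf (rowSet lam T i)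

/-- The row `r_b^{(i)}` of `Bot_i(T)`. -/
def rbot (lam : ℕ → ℕ) (T : ℕ × ℕ → ℕ) (i : ℕ) : ℕ := sSup (rowSet lam T i)

/-- The column `c_t^{(i)}` of `Top_i(T)`. -/
def ctop (lam : ℕ → ℕ) (T : ℕ × ℕ → ℕ) (i : ℕ) : ℕ :=
  sInf {c | IsCell lam (rtop lam T i, c) ∧ T (rtop lam T i, c) = i}

/-- The column `c_b^{(i)}` of `Bot_i(T)`. -/
def cbot (lam : ℕ → ℕ) (T : ℕ × ℕ → ℕ) (i : ℕ) : ℕ :=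
  sInf {c | IsCell lam (rbot lam T i, c) ∧ T (rbot lam T i, c) = i}

/-- `i` is a descent of `T`. -/
def IsDescent (lam : ℕ → ℕ) (T : ℕ × ℕ → ℕ) (i : ℕ) : Prop :=
  rtop lam T i < rbot lam T (i + 1)

/-- `i` is an attacking descent of `T`. -/
def IsAttacking (lam : ℕ → ℕ) (T : ℕ × ℕ → ℕ) (i : ℕ) : Prop :=
  IsDescent lam T i ∧
    ((∃ r c, IsCell lam (r, c) ∧ IsCell lam (r + 1, c) ∧ T (r, c) = i ∧ T (r + 1, c) = i + 1) ∨
      (∃ p, IsCell lam p ∧ T p = i + 1 ∧ p.1 ≤ rbot lam T i))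

/-- `s_i · T`: exchange the entries `i` and `i+1` of `T`. -/
def swapTab (lam : ℕ → ℕ) (i : ℕ) (T : ℕ × ℕ → ℕ) : ℕ × ℕ → ℕ := fun p =>
  if IsCell lam p then (if T p = i then i + 1 else if T p = i + 1 then i else T p) else 0

/-- The `0`-Hecke operator `π_i` on the free `ℂ`-module on fillings of the diagram of `lam`. -/
def piOp (lam : ℕ → ℕ) (i : ℕ) :
    ((ℕ × ℕ → ℕ) →₀ ℂ) →ₗ[ℂ] ((ℕ × ℕ → ℕ) →₀ ℂ) :=
  Finsupp.lsum ℂ fun T => LinearMap.toSpanSingleton ℂ ((ℕ × ℕ → ℕ) →₀ ℂ)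
    (if ¬ IsDescent lam T i then Finsupp.single T (1 : ℂ)
     else if IsAttacking lam T i then 0
     else Finsupp.single (swapTab lam i T) (1 : ℂ))

/-- The basis vectors of `ℂ · IGLT_m(λ)` inside the ambient free module. -/
def iglSingles (lam : ℕ → ℕ) (m : ℕ) : Set ((ℕ × ℕ → ℕ) →₀ ℂ) :=
  {f | ∃ T, IsIGLT lam m T ∧ f = Finsupp.single T (1 : ℂ)}

/-! ### Lattice paths `Γ_i(T)` and the equivalence relation `∼` -/

/-- The (extended) entry of the box `p` is `< i`: boxes outside the positive quadrant count
as `-∞`, boxes in the positive quadrant but outside the diagram count as `+∞`. -/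
def entryLt (lam : ℕ → ℕ) (T : ℕ × ℕ → ℕ) (i : ℕ) (p : ℕ × ℕ) : Prop :=
  p.1 = 0 ∨ p.2 = 0 ∨ (IsCell lam p ∧ T p < i)

/-- The (extended) entry of the box `p` is `≥ i`. -/
def entryGe (lam : ℕ → ℕ) (T : ℕ × ℕ → ℕ) (i : ℕ) (p : ℕ × ℕ) : Prop :=
  IsCell lam p → i ≤ T p

/-- One step of the lattice path `Γ_i(T)`: from the lattice point `p = ⟨r,c⟩` either one
step up to `⟨r-1,c⟩` (the left box has entry `< i`, the right box entry `≥ i`) or one step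
right to `⟨r,c+1⟩` (the above box has entry `< i`, the below box entry `≥ i`). -/
def gammaStep (lam : ℕ → ℕ) (T : ℕ × ℕ → ℕ) (i : ℕ) (p q : ℕ × ℕ) : Prop :=
  (1 ≤ p.1 ∧ q = (p.1 - 1, p.2) ∧ entryLt lam T i (p.1, p.2) ∧
      entryGe lam T i (p.1, p.2 + 1)) ∨
  (q = (p.1, p.2 + 1) ∧ entryLt lam T i (p.1, p.2 + 1) ∧
      entryGe lam T i (p.1 + 1, p.2 + 1))

/-- `V` is (the vertex set of) the lattice path `Γ_i(T)`, running from the bottom-left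
corner of `Bot_i(T)` to the top-right corner of `Top_i(T)`. -/
def IsGammaPath (lam : ℕ → ℕ) (T : ℕ × ℕ → ℕ) (i : ℕ) (V : Set (ℕ × ℕ)) : Prop :=
  ∃ P : List (ℕ × ℕ), P ≠ [] ∧
    P.head? = some (rbot lam T i, cbot lam T i - 1) ∧
    P.getLast? = some (rtop lam T i - 1, ctop lam T i) ∧
    List.Chain' (gammaStep lam T i) P ∧ V = {p | p ∈ P}

/-- `i ∈ I(T)`: the entry `i` occupies more than one box of `T`. -/
def hasMultiple (lam : ℕ → ℕ) (T : ℕ × ℕ → ℕ) (i : ℕ) : Prop :=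
  ∃ p q, p ≠ q ∧ p ∈ cellsWith lam T i ∧ q ∈ cellsWith lam T i

/-- The set of pairs `(Γ_i(T), T⁻¹(i))` for `i ∈ I(T)`. -/
def gammaData (lam : ℕ → ℕ) (T : ℕ × ℕ → ℕ) : Set (Set (ℕ × ℕ) × Set (ℕ × ℕ)) :=
  {d | ∃ i, hasMultiple lam T i ∧ IsGammaPath lam T i d.1 ∧ d.2 = cellsWith lam T i}

/-- The equivalence relation `∼` on tableaux. -/
def TabEquiv (lam : ℕ → ℕ) (T₁ T₂ : ℕ × ℕ → ℕ) : Prop :=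
  gammaData lam T₁ = gammaData lam T₂

/-! ### Source and sink tableaux -/

def IsSourceTab (lam : ℕ → ℕ) (m : ℕ) (T : ℕ × ℕ → ℕ) : Prop :=
  IsIGLT lam m T ∧
    ¬ ∃ T' i, IsIGLT lam m T' ∧ T' ≠ T ∧ 1 ≤ i ∧ i ≤ m - 1 ∧
      piOp lam i (Finsupp.single T' (1 : ℂ)) = Finsupp.single T (1 : ℂ)

def IsSinkTab (lam : ℕ → ℕ) (m : ℕ) (T : ℕ × ℕ → ℕ) : Prop :=
  IsIGLT lam m T ∧
    ¬ ∃ T' i, IsIGLT lam m T' ∧ T' ≠ T ∧ 1 ≤ i ∧ i ≤ m - 1 ∧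
      piOp lam i (Finsupp.single T (1 : ℂ)) = Finsupp.single T' (1 : ℂ)

/-! ### Permutations, words, length and the left weak Bruhat order -/

def isWordIn (m : ℕ) (w : List ℕ) : Prop := ∀ j ∈ w, 1 ≤ j ∧ j ≤ m - 1

/-- The product `s_{i_p} ⋯ s_{i_2} s_{i_1}` of the simple transpositions indexed by the
word `w = [i_p, …, i_2, i_1]`. -/
def wordProd (w : List ℕ) : Equiv.Perm ℕ := (w.map fun j => Equiv.swap j (j + 1)).prod

/-- The Coxeter length of `σ` as an element of `S_m`. -/
def permLength (m : ℕ) (σ : Equiv.Perm ℕ) : ℕ :=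
  sInf {k | ∃ w, isWordIn m w ∧ wordProd w = σ ∧ w.length = k}

/-- `w` is a reduced word for `σ ∈ S_m`. -/
def IsReducedWord (m : ℕ) (w : List ℕ) (σ : Equiv.Perm ℕ) : Prop :=
  isWordIn m w ∧ wordProd w = σ ∧ w.length = permLength m σ

/-- `i ∈ Des_L(σ)`, i.e. `ℓ(s_i σ) < ℓ(σ)`. -/
def DesL (m : ℕ) (σ : Equiv.Perm ℕ) (i : ℕ) : Prop :=
  permLength m (Equiv.swap i (i + 1) * σ) < permLength m σ

/-- Covering relation of the left weak Bruhat order: `σ ⋖ s_i σ` for `i ∉ Des_L(σ)`. -/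
def weakCovL (m : ℕ) (σ ρ : Equiv.Perm ℕ) : Prop :=
  ∃ i, 1 ≤ i ∧ i ≤ m - 1 ∧ ¬ DesL m σ i ∧ ρ = Equiv.swap i (i + 1) * σ

/-- The left weak Bruhat order `⪯_L` on `S_m`. -/
def weakLe (m : ℕ) : Equiv.Perm ℕ → Equiv.Perm ℕ → Prop :=
  Relation.ReflTransGen (weakCovL m)

/-- The left weak Bruhat interval `[σ, ρ]_L`. -/
def weakInterval (m : ℕ) (σ ρ : Equiv.Perm ℕ) : Set (Equiv.Perm ℕ) :=
  {γ | weakLe m σ γ ∧ weakLe m γ ρ}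

/-- `σ` is a permutation of `{1, …, m}`. -/
def InSymm (m : ℕ) (σ : Equiv.Perm ℕ) : Prop := ∀ x, σ x ≠ x → 1 ≤ x ∧ x ≤ m

/-- `π_{i_p} ⋯ π_{i_2} π_{i_1} (x)` for the word `w = [i_p, …, i_2, i_1]`. -/
def applyWord (lam : ℕ → ℕ) (w : List ℕ) (x : (ℕ × ℕ → ℕ) →₀ ℂ) : (ℕ × ℕ → ℕ) →₀ ℂ :=
  w.foldr (fun j y => piOp lam j y) x

/-- The partial order `⪯_E`: `T₂ = π_σ (T₁)` for some `σ ∈ S_m`. -/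
def precE (lam : ℕ → ℕ) (m : ℕ) (T₁ T₂ : ℕ × ℕ → ℕ) : Prop :=
  ∃ σ w, IsReducedWord m w σ ∧
    applyWord lam w (Finsupp.single T₁ (1 : ℂ)) = Finsupp.single T₂ (1 : ℂ)

/-! ### Blocks `H_j`, reading words and `sfread` -/

/-- The set of descents of `TE` (inside `[1, m-1]`). -/
def descValsAll (lam : ℕ → ℕ) (m : ℕ) (TE : ℕ × ℕ → ℕ) : Set ℕ :=
  {d | 1 ≤ d ∧ d ≤ m - 1 ∧ IsDescent lam TE d}

/-- `k`, the number of descents of `TE`. -/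
def numDesc (lam : ℕ → ℕ) (m : ℕ) (TE : ℕ × ℕ → ℕ) : ℕ := (descValsAll lam m TE).ncard

/-- The index `j` such that `d_{j-1} < v ≤ d_j`. -/
def blockOf (lam : ℕ → ℕ) (m : ℕ) (TE : ℕ × ℕ → ℕ) (v : ℕ) : ℕ :=
  1 + {d | d ∈ descValsAll lam m TE ∧ d < v}.ncard

/-- The horizontal strip `H_j = TE⁻¹([d_{j-1}+1, d_j])`. -/
def Hset (lam : ℕ → ℕ) (m : ℕ) (TE : ℕ × ℕ → ℕ) (j : ℕ) : Set (ℕ × ℕ) :=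
  {p | IsCell lam p ∧ blockOf lam m TE (TE p) = j}

/-- The `(b+1)`-st smallest element of a set of naturals. -/
def nthInf (S : Set ℕ) : ℕ → ℕ
  | 0 => sInf S
  | b + 1 => nthInf {v | v ∈ S ∧ sInf S < v} b

/-- `d_j`, with `d_0 = 0` and `d_{k+1} = m`. -/
def dval (lam : ℕ → ℕ) (m : ℕ) (TE : ℕ × ℕ → ℕ) (j : ℕ) : ℕ :=
  if j = 0 then 0
  else if numDesc lam m TE < j then m
  else nthInf (descValsAll lam m TE) (j - 1)

/-- The word obtained by reading the entries of `T` on the boxes of `S` from right to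
left (i.e. by decreasing column). -/
def stripWord (lam : ℕ → ℕ) (T : ℕ × ℕ → ℕ) (S : Set (ℕ × ℕ)) : List ℕ :=
  (List.range (lam 1 + 1)).reverse.filterMap fun c =>
    if h : ∃ r, (r, c) ∈ S then some (T (sInf {r | (r, c) ∈ S}, c)) else none

/-- The standardized reading word of `T` (as a list): the concatenation over
`j = 1, …, k+1` of the de-duplicated right-to-left readings of `T` on `H_j`. -/
def sfreadList (lam : ℕ → ℕ) (m : ℕ) (TE T : ℕ × ℕ → ℕ) : List ℕ :=
  ((List.range (numDesc lam m TE + 1)).map fun j0 =>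
    (stripWord lam T (Hset lam m TE (j0 + 1))).dedup).flatten

/-- `u` is the one-line notation of `σ ∈ S_m`. -/
def IsOneLineOf (m : ℕ) (u : List ℕ) (σ : Equiv.Perm ℕ) : Prop :=
  InSymm m σ ∧ u.length = m ∧ ∀ j < m, σ (j + 1) = u.getD j 0

/-- The permutation of `S_m` whose one-line notation is `u` (junk value if none exists). -/
def toPerm (m : ℕ) (u : List ℕ) : Equiv.Perm ℕ :=
  if h : ∃ σ, IsOneLineOf m u σ then h.choose else 1

/-- The standardized reading word `sfread(T) ∈ S_m`. -/
def sfread (lam : ℕ → ℕ) (m : ℕ) (TE T : ℕ × ℕ → ℕ) : Equiv.Perm ℕ :=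
  toPerm m (sfreadList lam m TE T)

/-! ### The generalized composition `α_E`, standard ribbon tableaux, and `η` -/

/-- The `j`-th and `(j+1)`-st columns of `rd(α_E)` are connected, i.e.
`Bot_{d_{j-1}+1}(T_E)` is weakly left of `Top_{d_{j+1}}(T_E)`. -/
def connAt (lam : ℕ → ℕ) (m : ℕ) (TE : ℕ × ℕ → ℕ) (j : ℕ) : Prop :=
  cbot lam TE (dval lam m TE (j - 1) + 1) ≤ ctop lam TE (dval lam m TE (j + 1))

/-- The length `d_j - d_{j-1}` of the `j`-th column of `rd(α_E)`. -/
def colLen (lam : ℕ → ℕ) (m : ℕ) (TE : ℕ × ℕ → ℕ) (j : ℕ) : ℕ :=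
  dval lam m TE j - dval lam m TE (j - 1)

/-- The row coordinate (in `ℤ`, increasing downwards) of the top box of the `j`-th column
of the generalized ribbon diagram `rd(α_E)`. -/
def topRowZ (lam : ℕ → ℕ) (m : ℕ) (TE : ℕ × ℕ → ℕ) : ℕ → ℤ
  | 0 => 0
  | 1 => 0
  | j + 2 =>
      (if connAt lam m TE (j + 1) then topRowZ lam m TE (j + 1)
       else topRowZ lam m TE (j + 1) - 1) - ((colLen lam m TE (j + 2) : ℤ) - 1)

/-- The row coordinate of the `b`-th box from the top of the `j`-th column of `rd(α_E)`. -/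
def rowOfBox (lam : ℕ → ℕ) (m : ℕ) (TE : ℕ × ℕ → ℕ) (j b : ℕ) : ℤ :=
  topRowZ lam m TE j + (b : ℤ) - 1

/-- `(j, b)` is a box of `rd(α_E)`: column `j ∈ [1, k+1]`, box `b ∈ [1, d_j - d_{j-1}]`
from the top. -/
def inRangeBox (lam : ℕ → ℕ) (m : ℕ) (TE : ℕ × ℕ → ℕ) (j b : ℕ) : Prop :=
  1 ≤ j ∧ j ≤ numDesc lam m TE + 1 ∧ 1 ≤ b ∧ b ≤ colLen lam m TE j

/-- `F` is a standard ribbon tableau of shape `α_E` (encoded by column and position from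
the top; normalized to `0` outside `rd(α_E)`). -/
def IsSRT (lam : ℕ → ℕ) (m : ℕ) (TE : ℕ × ℕ → ℕ) (F : ℕ → ℕ → ℕ) : Prop :=
  (∀ j b, ¬ inRangeBox lam m TE j b → F j b = 0) ∧
  (∀ j b, inRangeBox lam m TE j b → 1 ≤ F j b ∧ F j b ≤ m) ∧
  (∀ v, 1 ≤ v → v ≤ m →
    ∃! q : ℕ × ℕ, inRangeBox lam m TE q.1 q.2 ∧ F q.1 q.2 = v) ∧
  (∀ j b, inRangeBox lam m TE j b → inRangeBox lam m TE j (b + 1) → F j b < F j (b + 1)) ∧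
  (∀ j, 1 ≤ j → j ≤ numDesc lam m TE → connAt lam m TE j →
    F j 1 < F (j + 1) (colLen lam m TE (j + 1)))

/-- The position (1-based, from the left) of the box `p` within the strip `H_j` counted
so that it increases by one along each connected component and repeats across breaks. -/
def idxIn (lam : ℕ → ℕ) (m : ℕ) (TE : ℕ × ℕ → ℕ) (j : ℕ) (p : ℕ × ℕ) : ℕ :=
  1 + {q | q ∈ Hset lam m TE j ∧ q.2 < p.2 ∧ (q.1, q.2 + 1) ∈ Hset lam m TE j}.ncard

/-- The filling `T_𝒯` of the Young diagram of `lam` associated to an SRT `F`. -/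
def Tfill (lam : ℕ → ℕ) (m : ℕ) (TE : ℕ × ℕ → ℕ) (F : ℕ → ℕ → ℕ) : ℕ × ℕ → ℕ := fun p =>
  if IsCell lam p then
    F (blockOf lam m TE (TE p)) (idxIn lam m TE (blockOf lam m TE (TE p)) p)
  else 0

/-- The linear map `η : ℂ·SRT(α_E) → ℂ·E`, `𝒯 ↦ T_𝒯` if `T_𝒯 ∈ E` and `𝒯 ↦ 0` otherwise. -/
def etaMap (lam : ℕ → ℕ) (m : ℕ) (TE : ℕ × ℕ → ℕ) :
    ((ℕ → ℕ → ℕ) →₀ ℂ) →ₗ[ℂ] ((ℕ × ℕ → ℕ) →₀ ℂ) :=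
  Finsupp.lsum ℂ fun F => LinearMap.toSpanSingleton ℂ ((ℕ × ℕ → ℕ) →₀ ℂ)
    (if IsSRT lam m TE F ∧ IsIGLT lam m (Tfill lam m TE F) ∧
        TabEquiv lam TE (Tfill lam m TE F)
     then Finsupp.single (Tfill lam m TE F) (1 : ℂ) else 0)

/-- The set of values of `T` on the strip `H_j`. -/
def valSet (lam : ℕ → ℕ) (m : ℕ) (TE T : ℕ × ℕ → ℕ) (j : ℕ) : Set ℕ :=
  {v | ∃ p ∈ Hset lam m TE j, T p = v}

/-- The standard ribbon tableau `𝒯_T` whose `j`-th column consists of the values of `T`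
on `H_j`, increasing from top to bottom. -/
def canonSRT (lam : ℕ → ℕ) (m : ℕ) (TE T : ℕ × ℕ → ℕ) : ℕ → ℕ → ℕ := fun j b =>
  if inRangeBox lam m TE j b then nthInf (valSet lam m TE T j) (b - 1) else 0

/-- `s_i · F`: exchange the entries `i` and `i+1` of a standard ribbon tableau. -/
def swapSRT (i : ℕ) (F : ℕ → ℕ → ℕ) : ℕ → ℕ → ℕ := fun j b =>
  if F j b = i then i + 1 else if F j b = i + 1 then i else F j b

/-- `i` appears strictly above `i+1` in `F`. -/
def aboveIn (lam : ℕ → ℕ) (m : ℕ) (TE : ℕ × ℕ → ℕ) (F : ℕ → ℕ → ℕ) (i : ℕ) : Prop :=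
  ∃ j b j' b', inRangeBox lam m TE j b ∧ inRangeBox lam m TE j' b' ∧
    F j b = i ∧ F j' b' = i + 1 ∧ rowOfBox lam m TE j b < rowOfBox lam m TE j' b'

/-- `i` and `i+1` lie in the same row of `F`. -/
def sameRowIn (lam : ℕ → ℕ) (m : ℕ) (TE : ℕ × ℕ → ℕ) (F : ℕ → ℕ → ℕ) (i : ℕ) : Prop :=
  ∃ j b j' b', inRangeBox lam m TE j b ∧ inRangeBox lam m TE j' b' ∧
    F j b = i ∧ F j' b' = i + 1 ∧ rowOfBox lam m TE j b = rowOfBox lam m TE j' b'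

/-- The `0`-Hecke operator `π_i` on `ℂ·SRT(α_E)` (inside the ambient free module). -/
def piSRT (lam : ℕ → ℕ) (m : ℕ) (TE : ℕ × ℕ → ℕ) (i : ℕ) :
    ((ℕ → ℕ → ℕ) →₀ ℂ) →ₗ[ℂ] ((ℕ → ℕ → ℕ) →₀ ℂ) :=
  Finsupp.lsum ℂ fun F => LinearMap.toSpanSingleton ℂ ((ℕ → ℕ → ℕ) →₀ ℂ)
    (if aboveIn lam m TE F i then Finsupp.single F (1 : ℂ)
     else if sameRowIn lam m TE F i then 0
     else Finsupp.single (swapSRT i F) (1 : ℂ))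

/-! ### Weak Bruhat interval modules -/

/-- The `0`-Hecke operator `π_i` of the weak Bruhat interval module `B(σ, ρ)`. -/
def piB (m : ℕ) (σ ρ : Equiv.Perm ℕ) (i : ℕ) :
    (Equiv.Perm ℕ →₀ ℂ) →ₗ[ℂ] (Equiv.Perm ℕ →₀ ℂ) :=
  Finsupp.lsum ℂ fun γ => LinearMap.toSpanSingleton ℂ (Equiv.Perm ℕ →₀ ℂ)
    (if DesL m γ i then Finsupp.single γ (1 : ℂ)
     else if Equiv.swap i (i + 1) * γ ∈ weakInterval m σ ρ then
       Finsupp.single (Equiv.swap i (i + 1) * γ) (1 : ℂ)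
     else 0)

/-- The projection `pr : B(σ, ρ) → B(σ, ρ')`. -/
def prMap (m : ℕ) (σ ρ' : Equiv.Perm ℕ) :
    (Equiv.Perm ℕ →₀ ℂ) →ₗ[ℂ] (Equiv.Perm ℕ →₀ ℂ) :=
  Finsupp.lsum ℂ fun γ => LinearMap.toSpanSingleton ℂ (Equiv.Perm ℕ →₀ ℂ)
    (if γ ∈ weakInterval m σ ρ' then Finsupp.single γ (1 : ℂ) else 0)

/-- The linear map `ℂ·E → B(sfread(T_E), sfread(T'_E))`, `T ↦ sfread(T)`. -/
def thetaMap (lam : ℕ → ℕ) (m : ℕ) (TE : ℕ × ℕ → ℕ) :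
    ((ℕ × ℕ → ℕ) →₀ ℂ) →ₗ[ℂ] (Equiv.Perm ℕ →₀ ℂ) :=
  Finsupp.lsum ℂ fun T => LinearMap.toSpanSingleton ℂ (Equiv.Perm ℕ →₀ ℂ)
    (if IsIGLT lam m T ∧ TabEquiv lam TE T then
      Finsupp.single (sfread lam m TE T) (1 : ℂ) else 0)

/-! ### `itread`, `w₀` of parabolic subgroups and `𝒯^⊙_{α_E}` -/

/-- `σ` lies in the subgroup generated by `{s_j : j ∈ S}`. -/
def genBy (S : Set ℕ) (σ : Equiv.Perm ℕ) : Prop :=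
  ∃ w : List ℕ, (∀ j ∈ w, j ∈ S) ∧ wordProd w = σ

/-- The longest element of the parabolic subgroup of `S_m` generated by `{s_j : j ∈ S}`. -/
def longestIn (m : ℕ) (S : Set ℕ) : Equiv.Perm ℕ :=
  if h : ∃ σ, genBy S σ ∧ ∀ τ, genBy S τ → permLength m τ ≤ permLength m σ then h.choose
  else 1

/-- `set((α_E)_⊙) = {d_j : 1 ≤ j ≤ k, columns j and j+1 connected}`. -/
def odotSet (lam : ℕ → ℕ) (m : ℕ) (TE : ℕ × ℕ → ℕ) : Set ℕ :=
  {d | ∃ j, 1 ≤ j ∧ j ≤ numDesc lam m TE ∧ connAt lam m TE j ∧ d = dval lam m TE j}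

/-- `set(((α_E)_⊙)^c) = [1, m-1] \ set((α_E)_⊙)`. -/
def odotComplSet (lam : ℕ → ℕ) (m : ℕ) (TE : ℕ × ℕ → ℕ) : Set ℕ :=
  {i | 1 ≤ i ∧ i ≤ m - 1 ∧ i ∉ odotSet lam m TE}

/-- The reading word `itread(F)` of an SRT of shape `α_E`: entries from left to right,
starting with the bottom row and proceeding upwards. -/
def itreadList (lam : ℕ → ℕ) (m : ℕ) (TE : ℕ × ℕ → ℕ) (F : ℕ → ℕ → ℕ) : List ℕ :=
  let k := numDesc lam m TE
  let rmax : ℤ := (colLen lam m TE 1 : ℤ) - 1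
  let rmin : ℤ := topRowZ lam m TE (k + 1)
  ((List.range (rmax - rmin + 1).toNat).map fun t =>
    (List.range (k + 1)).filterMap fun j0 =>
      let j := j0 + 1
      let b : ℤ := (rmax - t) - topRowZ lam m TE j + 1
      if 1 ≤ b ∧ b ≤ (colLen lam m TE j : ℤ) then some (F j b.toNat) else none).flatten

/-- The one-line notation of `σ ∈ S_m`. -/
def oneLineList (m : ℕ) (σ : Equiv.Perm ℕ) : List ℕ :=
  (List.range m).map fun t => σ (t + 1)

/-! ### Basic lemmas -/

section Basics

variable {n m : ℕ} {lam : ℕ → ℕ} {T : ℕ × ℕ → ℕ}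

lemma lam_anti (hlam : IsPartitionOf n lam) {r r' : ℕ} (hr : 1 ≤ r) (hrr : r ≤ r') :
    lam r' ≤ lam r := by
  induction r' with
  | zero => omega
  | succ k ih =>
    rcases Nat.lt_or_ge r (k+1) with h | h
    · exact le_trans (hlam.1 k (by omega)) (ih (by omega))
    · have : r = k + 1 := by omega
      simp [this]

lemma cell_left (hlam : IsPartitionOf n lam) {r c c' : ℕ} (h : IsCell lam (r, c))
    (h1 : 1 ≤ c') (h2 : c' ≤ c) : IsCell lam (r, c') := by
  obtain ⟨a, b, d⟩ := h
  exact ⟨a, h1, le_trans h2 d⟩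

lemma cell_up (hlam : IsPartitionOf n lam) {r r' c : ℕ} (h : IsCell lam (r, c))
    (h1 : 1 ≤ r') (h2 : r' ≤ r) : IsCell lam (r', c) := by
  obtain ⟨a, b, d⟩ := h
  exact ⟨h1, b, le_trans d (lam_anti hlam h1 h2)⟩

lemma cell_row_le (hlam : IsPartitionOf n lam) {r c : ℕ}
    (h : IsCell lam (r, c)) : r ≤ n := by
  by_contra hr
  obtain ⟨a, b, d⟩ := h
  have := hlam.2.1 r (by omega)
  simp only at d
  omega

/-- strict increase along a row, not necessarily adjacent -/
lemma row_lt (hlam : IsPartitionOf n lam) (hT : IsIGLT lam m T) {r c c' : ℕ}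
    (hc : IsCell lam (r, c)) (hc' : IsCell lam (r, c')) (h : c < c') :
    T (r, c) < T (r, c') := by
  induction c' with
  | zero => omega
  | succ k ih =>
    rcases Nat.lt_or_ge c k with h2 | h2
    · have hk : IsCell lam (r, k) := cell_left hlam hc' (by omega) (by omega)
      exact lt_trans (ih hk h2) (hT.2.2.1 r k hk hc')
    · have : c = k := by omega
      subst this
      exact hT.2.2.1 r c hc hc'

/-- strict increase along a column -/
lemma col_lt (hlam : IsPartitionOf n lam) (hT : IsIGLT lam m T) {r r' c : ℕ}
    (hc : IsCell lam (r, c)) (hc' : IsCell lam (r', c)) (h : r < r') :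
    T (r, c) < T (r', c) := by
  induction r' with
  | zero => omega
  | succ k ih =>
    rcases Nat.lt_or_ge r k with h2 | h2
    · have hk : IsCell lam (k, c) := cell_up hlam hc' (by omega) (by omega)
      exact lt_trans (ih hk h2) (hT.2.2.2.1 k c hk hc')
    · have : r = k := by omega
      subst this
      exact hT.2.2.2.1 r c hc hc'

end Basics
/-! ### Blocks, rowSet, rtop/rbot/ctop/cbot, theta -/

section Blocks

variable {n m : ℕ} {lam : ℕ → ℕ} {T : ℕ × ℕ → ℕ}

lemma val_mem_range (hT : IsIGLT lam m T) {p : ℕ × ℕ} (hp : IsCell lam p) :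
    1 ≤ T p ∧ T p ≤ m := hT.2.1 p hp

lemma exists_cell (hT : IsIGLT lam m T) {i : ℕ} (h1 : 1 ≤ i) (h2 : i ≤ m) :
    ∃ p, IsCell lam p ∧ T p = i := hT.2.2.2.2 i h1 h2

lemma rowSet_nonempty (hT : IsIGLT lam m T) {i : ℕ} (h1 : 1 ≤ i) (h2 : i ≤ m) :
    (rowSet lam T i).Nonempty := by
  obtain ⟨⟨r, c⟩, hp, hv⟩ := exists_cell hT h1 h2
  exact ⟨r, c, hp, hv⟩

lemma rowSet_bddAbove (hlam : IsPartitionOf n lam) (i : ℕ) :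
    BddAbove (rowSet lam T i) := by
  refine ⟨n, fun r hr => ?_⟩
  obtain ⟨c, hc, hv⟩ := hr
  exact cell_row_le hlam hc

lemma rtop_mem (hT : IsIGLT lam m T) {i : ℕ} (h1 : 1 ≤ i) (h2 : i ≤ m) :
    rtop lam T i ∈ rowSet lam T i := Nat.sInf_mem (rowSet_nonempty hT h1 h2)

lemma rbot_mem (hlam : IsPartitionOf n lam) (hT : IsIGLT lam m T) {i : ℕ}
    (h1 : 1 ≤ i) (h2 : i ≤ m) : rbot lam T i ∈ rowSet lam T i :=
  Nat.sSup_mem (rowSet_nonempty hT h1 h2) (rowSet_bddAbove hlam i)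

lemma le_rbot (hlam : IsPartitionOf n lam) {i r : ℕ} (hr : r ∈ rowSet lam T i) :
    r ≤ rbot lam T i := le_csSup (rowSet_bddAbove hlam i) hr

lemma rtop_le {i r : ℕ} (hr : r ∈ rowSet lam T i) : rtop lam T i ≤ r := Nat.sInf_le hr

lemma rtop_le_rbot (hlam : IsPartitionOf n lam) (hT : IsIGLT lam m T) {i : ℕ}
    (h1 : 1 ≤ i) (h2 : i ≤ m) : rtop lam T i ≤ rbot lam T i :=
  le_rbot hlam (rtop_mem hT h1 h2)

lemma mem_rowSet_of_cell {i : ℕ} {p : ℕ × ℕ} (hp : IsCell lam p) (hv : T p = i) :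
    p.1 ∈ rowSet lam T i := ⟨p.2, by rcases p with ⟨r,c⟩; exact hp, by rcases p with ⟨r,c⟩; exact hv⟩

lemma bot_cell (hlam : IsPartitionOf n lam) (hT : IsIGLT lam m T) {i : ℕ}
    (h1 : 1 ≤ i) (h2 : i ≤ m) :
    IsCell lam (rbot lam T i, cbot lam T i) ∧ T (rbot lam T i, cbot lam T i) = i := by
  have hr := rbot_mem hlam hT h1 h2
  obtain ⟨c, hc, hv⟩ := hr
  have hne : {c | IsCell lam (rbot lam T i, c) ∧ T (rbot lam T i, c) = i}.Nonempty := ⟨c, hc, hv⟩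
  exact Nat.sInf_mem hne

lemma top_cell (hT : IsIGLT lam m T) {i : ℕ} (h1 : 1 ≤ i) (h2 : i ≤ m) :
    IsCell lam (rtop lam T i, ctop lam T i) ∧ T (rtop lam T i, ctop lam T i) = i := by
  have hr := rtop_mem hT h1 h2
  obtain ⟨c, hc, hv⟩ := hr
  have hne : {c | IsCell lam (rtop lam T i, c) ∧ T (rtop lam T i, c) = i}.Nonempty := ⟨c, hc, hv⟩
  exact Nat.sInf_mem hne

/-- number of cells in row `r` with entry < i -/
def theta (lam : ℕ → ℕ) (T : ℕ × ℕ → ℕ) (i r : ℕ) : ℕ :=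
  ((Finset.Icc 1 (lam r)).filter fun c => T (r, c) < i).card

/-- a down-closed subset of `Icc 1 L` is an initial segment -/
lemma downset_eq_Icc {L : ℕ} {S : Finset ℕ} (hS : S ⊆ Finset.Icc 1 L)
    (hdown : ∀ a b, b ∈ S → 1 ≤ a → a ≤ b → a ∈ S) : S = Finset.Icc 1 S.card := by
  have hsub : S ⊆ Finset.Icc 1 S.card := by
    intro x hx
    by_contra hxx
    have hx1 : 1 ≤ x := (Finset.mem_Icc.mp (hS hx)).1
    have hxc : S.card < x := by
      simp only [Finset.mem_Icc] at hxx; omega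
    have : Finset.Icc 1 x ⊆ S := fun a ha => by
      have := Finset.mem_Icc.mp ha
      exact hdown a x hx this.1 this.2
    have := Finset.card_le_card this
    simp [Nat.card_Icc] at this
    omega
  have : S.card ≤ (Finset.Icc 1 S.card).card := Finset.card_le_card hsub
  simp only [Nat.card_Icc, Nat.add_sub_cancel] at this
  exact Finset.eq_of_subset_of_card_le hsub (by simp [Nat.card_Icc])

lemma theta_filter_eq (hlam : IsPartitionOf n lam) (hT : IsIGLT lam m T) (i r : ℕ)
    (hr : 1 ≤ r) :
    ((Finset.Icc 1 (lam r)).filter fun c => T (r, c) < i) = Finset.Icc 1 (theta lam T i r) := by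
  apply downset_eq_Icc (Finset.filter_subset _ _)
  intro a b hb h1 hab
  simp only [Finset.mem_filter, Finset.mem_Icc] at hb ⊢
  refine ⟨⟨h1, le_trans hab hb.1.2⟩, ?_⟩
  rcases Nat.lt_or_ge a b with h | h
  · have hcb : IsCell lam (r, b) := ⟨hr, hb.1.1, hb.1.2⟩
    have hca : IsCell lam (r, a) := cell_left hlam hcb h1 hab
    exact lt_trans (row_lt hlam hT hca hcb h) hb.2
  · have : a = b := by omega
    subst this; exact hb.2

lemma theta_le_lam (lam : ℕ → ℕ) (T : ℕ × ℕ → ℕ) (i r : ℕ) : theta lam T i r ≤ lam r := by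
  have := Finset.card_le_card (Finset.filter_subset (fun c => T (r, c) < i) (Finset.Icc 1 (lam r)))
  simpa [Nat.card_Icc, theta] using this

lemma theta_prefix (hlam : IsPartitionOf n lam) (hT : IsIGLT lam m T) {i r c : ℕ}
    (hc : IsCell lam (r, c)) : T (r, c) < i ↔ c ≤ theta lam T i r := by
  obtain ⟨h1, h2, h3⟩ := hc
  simp only at h1 h2 h3
  constructor
  · intro h
    have : c ∈ (Finset.Icc 1 (lam r)).filter fun c => T (r, c) < i := by
      simp [Finset.mem_filter, Finset.mem_Icc, h2, h3, h]
    rw [theta_filter_eq hlam hT i r h1] at this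
    exact (Finset.mem_Icc.mp this).2
  · intro h
    have : c ∈ Finset.Icc 1 (theta lam T i r) := Finset.mem_Icc.mpr ⟨h2, h⟩
    rw [← theta_filter_eq hlam hT i r h1] at this
    exact (Finset.mem_filter.mp this).2

lemma theta_cell (hlam : IsPartitionOf n lam) (hT : IsIGLT lam m T) {i r c : ℕ}
    (hr : 1 ≤ r) (h1 : 1 ≤ c) (h2 : c ≤ theta lam T i r) :
    IsCell lam (r, c) ∧ T (r, c) < i := by
  have hcell : IsCell lam (r, c) := ⟨hr, h1, le_trans h2 (theta_le_lam lam T i r)⟩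
  exact ⟨hcell, (theta_prefix hlam hT hcell).mpr h2⟩

lemma theta_mono (hlam : IsPartitionOf n lam) (hT : IsIGLT lam m T) {i r : ℕ} (hr : 1 ≤ r) :
    theta lam T i (r + 1) ≤ theta lam T i r := by
  rcases Nat.eq_zero_or_pos (theta lam T i (r+1)) with h | h
  · omega
  · rw [← Nat.add_sub_cancel (n := theta lam T i (r+1)) (m := 0)]
    apply le_of_not_gt
    intro hlt
    -- take c := theta (r+1); cell (r+1,c) with value < i, then (r,c) value < i so c ≤ theta r
    set c := theta lam T i (r + 1) with hc
    obtain ⟨hcell, hval⟩ := theta_cell hlam hT (by omega) (by omega) (le_refl c)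
    have hcell' : IsCell lam (r, c) := cell_up hlam hcell hr (by omega)
    have : T (r, c) < i := lt_trans (col_lt hlam hT hcell' hcell (by omega)) hval
    have := (theta_prefix hlam hT hcell').mp this
    simp only [Nat.add_sub_cancel] at hlt
    omega

/-- theta at the bottom row equals cbot - 1 -/
lemma theta_rbot (hlam : IsPartitionOf n lam) (hT : IsIGLT lam m T) {i : ℕ}
    (h1 : 1 ≤ i) (h2 : i ≤ m) :
    theta lam T i (rbot lam T i) = cbot lam T i - 1 ∧ 1 ≤ cbot lam T i := by
  obtain ⟨hcell, hval⟩ := bot_cell hlam hT h1 h2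
  have hc1 : 1 ≤ cbot lam T i := hcell.2.1
  have hr1 : 1 ≤ rbot lam T i := hcell.1
  constructor
  · have hle : theta lam T i (rbot lam T i) ≤ cbot lam T i - 1 := by
      by_contra hgt
      push_neg at hgt
      have : cbot lam T i ≤ theta lam T i (rbot lam T i) := by omega
      obtain ⟨hcell2, hval2⟩ := theta_cell hlam hT hr1 hc1 this
      omega
    have hge : cbot lam T i - 1 ≤ theta lam T i (rbot lam T i) := by
      rcases Nat.eq_or_lt_of_le hc1 with h | h
      · omega
      · have hcell2 : IsCell lam (rbot lam T i, cbot lam T i - 1) :=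
          cell_left hlam hcell (by omega) (by omega)
        have : T (rbot lam T i, cbot lam T i - 1) < i := by
          have := row_lt hlam hT hcell2 hcell (by omega)
          omega
        exact (theta_prefix hlam hT hcell2).mp this
    omega
  · exact hc1

lemma theta_rtop (hlam : IsPartitionOf n lam) (hT : IsIGLT lam m T) {i : ℕ}
    (h1 : 1 ≤ i) (h2 : i ≤ m) :
    theta lam T i (rtop lam T i) = ctop lam T i - 1 ∧ 1 ≤ ctop lam T i := by
  obtain ⟨hcell, hval⟩ := top_cell hT h1 h2
  have hc1 : 1 ≤ ctop lam T i := hcell.2.1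
  have hr1 : 1 ≤ rtop lam T i := hcell.1
  constructor
  · have hle : theta lam T i (rtop lam T i) ≤ ctop lam T i - 1 := by
      by_contra hgt
      push_neg at hgt
      have : ctop lam T i ≤ theta lam T i (rtop lam T i) := by omega
      obtain ⟨hcell2, hval2⟩ := theta_cell hlam hT hr1 hc1 this
      omega
    have hge : ctop lam T i - 1 ≤ theta lam T i (rtop lam T i) := by
      rcases Nat.eq_or_lt_of_le hc1 with h | h
      · omega
      · have hcell2 : IsCell lam (rtop lam T i, ctop lam T i - 1) :=
          cell_left hlam hcell (by omega) (by omega)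
        have : T (rtop lam T i, ctop lam T i - 1) < i := by
          have := row_lt hlam hT hcell2 hcell (by omega)
          omega
        exact (theta_prefix hlam hT hcell2).mp this
    omega
  · exact hc1

end Blocks
/-! ### swapTab and the characterization of source tableaux -/

section Swap

variable {n m : ℕ} {lam : ℕ → ℕ} {T : ℕ × ℕ → ℕ} {i : ℕ}

lemma swap_cell_eq (lam : ℕ → ℕ) (i : ℕ) (T : ℕ × ℕ → ℕ) {p : ℕ × ℕ} (hp : IsCell lam p) :
    swapTab lam i T p = if T p = i then i + 1 else if T p = i + 1 then i else T p := by
  simp [swapTab, hp]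

lemma swap_notcell (lam : ℕ → ℕ) (i : ℕ) (T : ℕ × ℕ → ℕ) {p : ℕ × ℕ} (hp : ¬ IsCell lam p) :
    swapTab lam i T p = 0 := by simp [swapTab, hp]

lemma swap_lt_iff (lam : ℕ → ℕ) (T : ℕ × ℕ → ℕ) {i j : ℕ} (hj : j ≤ i ∨ i + 2 ≤ j)
    {p : ℕ × ℕ} (hp : IsCell lam p) : swapTab lam i T p < j ↔ T p < j := by
  rw [swap_cell_eq lam i T hp]
  rcases hj with h | h <;> split_ifs with h1 h2 <;> omega

lemma swap_swap (hT : IsIGLT lam m T) : swapTab lam i (swapTab lam i T) = T := by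
  funext p
  by_cases hp : IsCell lam p
  · rw [swap_cell_eq lam i _ hp, swap_cell_eq lam i T hp]
    by_cases h1 : T p = i <;> by_cases h2 : T p = i + 1 <;>
      simp only [h1, h2, if_true, if_false, if_pos, if_neg] <;> split_ifs <;> omega
  · rw [swap_notcell lam i _ hp, hT.1 p hp]

lemma swap_ne (hT : IsIGLT lam m T) (h1 : 1 ≤ i) (h2 : i ≤ m) : swapTab lam i T ≠ T := by
  obtain ⟨p, hp, hv⟩ := exists_cell hT h1 h2
  intro h
  have := congrFun h p
  rw [swap_cell_eq lam i T hp, hv] at this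
  simp at this

lemma cellsWith_swap_i (lam : ℕ → ℕ) (i : ℕ) (T : ℕ × ℕ → ℕ) :
    cellsWith lam (swapTab lam i T) i = cellsWith lam T (i + 1) := by
  ext p
  simp only [cellsWith, Set.mem_setOf_eq]
  constructor
  · rintro ⟨hp, hv⟩
    rw [swap_cell_eq lam i T hp] at hv
    refine ⟨hp, ?_⟩
    split_ifs at hv <;> omega
  · rintro ⟨hp, hv⟩
    refine ⟨hp, ?_⟩
    rw [swap_cell_eq lam i T hp, hv]
    split_ifs <;> omega

lemma cellsWith_swap_i1 (lam : ℕ → ℕ) (i : ℕ) (T : ℕ × ℕ → ℕ) :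
    cellsWith lam (swapTab lam i T) (i + 1) = cellsWith lam T i := by
  ext p
  simp only [cellsWith, Set.mem_setOf_eq]
  constructor
  · rintro ⟨hp, hv⟩
    rw [swap_cell_eq lam i T hp] at hv
    refine ⟨hp, ?_⟩
    split_ifs at hv <;> omega
  · rintro ⟨hp, hv⟩
    exact ⟨hp, by rw [swap_cell_eq lam i T hp, hv]; simp⟩

lemma cellsWith_swap_other (lam : ℕ → ℕ) (T : ℕ × ℕ → ℕ) {i j : ℕ}
    (hj : j ≠ i ∧ j ≠ i + 1) : cellsWith lam (swapTab lam i T) j = cellsWith lam T j := by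
  ext p
  simp only [cellsWith, Set.mem_setOf_eq]
  constructor
  · rintro ⟨hp, hv⟩
    rw [swap_cell_eq lam i T hp] at hv
    refine ⟨hp, ?_⟩
    split_ifs at hv <;> omega
  · rintro ⟨hp, hv⟩
    refine ⟨hp, ?_⟩
    rw [swap_cell_eq lam i T hp]
    split_ifs <;> omega

lemma rowSet_eq_of_cellsWith {lam : ℕ → ℕ} {T U : ℕ × ℕ → ℕ} {i j : ℕ}
    (h : cellsWith lam T i = cellsWith lam U j) : rowSet lam T i = rowSet lam U j := by
  ext r
  simp only [rowSet, Set.mem_setOf_eq]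
  constructor
  · rintro ⟨c, hc, hv⟩
    have : (r, c) ∈ cellsWith lam U j := h ▸ (⟨hc, hv⟩ : (r,c) ∈ cellsWith lam T i)
    exact ⟨c, this.1, this.2⟩
  · rintro ⟨c, hc, hv⟩
    have : (r, c) ∈ cellsWith lam T i := h.symm ▸ (⟨hc, hv⟩ : (r,c) ∈ cellsWith lam U j)
    exact ⟨c, this.1, this.2⟩

lemma rbot_eq_of_cellsWith {lam : ℕ → ℕ} {T U : ℕ × ℕ → ℕ} {i j : ℕ}
    (h : cellsWith lam T i = cellsWith lam U j) :
    rbot lam T i = rbot lam U j ∧ rtop lam T i = rtop lam U j ∧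
    cbot lam T i = cbot lam U j ∧ ctop lam T i = ctop lam U j := by
  have hrs := rowSet_eq_of_cellsWith h
  have hrb : rbot lam T i = rbot lam U j := by rw [rbot, rbot, hrs]
  have hrt : rtop lam T i = rtop lam U j := by rw [rtop, rtop, hrs]
  refine ⟨hrb, hrt, ?_, ?_⟩
  · rw [cbot, cbot, ← hrb]
    congr 1
    ext c
    constructor
    · rintro ⟨hc, hv⟩
      have : (rbot lam T i, c) ∈ cellsWith lam U j := h ▸ (⟨hc, hv⟩ : _ ∈ cellsWith lam T i)
      exact ⟨this.1, this.2⟩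
    · rintro ⟨hc, hv⟩
      have : (rbot lam T i, c) ∈ cellsWith lam T i := h.symm ▸ (⟨hc, hv⟩ : _ ∈ cellsWith lam U j)
      exact ⟨this.1, this.2⟩
  · rw [ctop, ctop, ← hrt]
    congr 1
    ext c
    constructor
    · rintro ⟨hc, hv⟩
      have : (rtop lam T i, c) ∈ cellsWith lam U j := h ▸ (⟨hc, hv⟩ : _ ∈ cellsWith lam T i)
      exact ⟨this.1, this.2⟩
    · rintro ⟨hc, hv⟩
      have : (rtop lam T i, c) ∈ cellsWith lam T i := h.symm ▸ (⟨hc, hv⟩ : _ ∈ cellsWith lam U j)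
      exact ⟨this.1, this.2⟩

/-- membership row bounds for a value -/
lemma row_ge_rtop {p : ℕ × ℕ} (hp : IsCell lam p) (hv : T p = i) : rtop lam T i ≤ p.1 :=
  rtop_le (mem_rowSet_of_cell hp hv)

lemma row_le_rbot (hlam : IsPartitionOf n lam) {p : ℕ × ℕ} (hp : IsCell lam p)
    (hv : T p = i) : p.1 ≤ rbot lam T i := le_rbot hlam (mem_rowSet_of_cell hp hv)

/-- under an inversion, the swap is an IGLT -/
lemma swap_IGLT (hlam : IsPartitionOf n lam) (hT : IsIGLT lam m T)
    (hi1 : 1 ≤ i) (hi2 : i + 1 ≤ m) (hinv : rbot lam T (i + 1) < rtop lam T i) :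
    IsIGLT lam m (swapTab lam i T) := by
  -- no cell of value i is weakly above (row-wise) a cell of value i+1:
  have key : ∀ p q : ℕ × ℕ, IsCell lam p → IsCell lam q → T p = i → T q = i + 1 →
      q.1 < p.1 := by
    intro p q hp hq hvp hvq
    have h1 := row_ge_rtop hp hvp
    have h2 := row_le_rbot hlam hq hvq
    omega
  refine ⟨?_, ?_, ?_, ?_, ?_⟩
  · intro p hp; exact swap_notcell lam i T hp
  · intro p hp
    have := hT.2.1 p hp
    rw [swap_cell_eq lam i T hp]
    split_ifs <;> omega
  · intro r c h1 h2
    have hlt := hT.2.2.1 r c h1 h2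
    rw [swap_cell_eq lam i T h1, swap_cell_eq lam i T h2]
    have hne : ¬ (T (r, c) = i ∧ T (r, c+1) = i + 1) := by
      rintro ⟨ha, hb⟩
      have := key (r, c) (r, c+1) h1 h2 ha hb
      simp at this
    split_ifs <;> omega
  · intro r c h1 h2
    have hlt := hT.2.2.2.1 r c h1 h2
    rw [swap_cell_eq lam i T h1, swap_cell_eq lam i T h2]
    have hne : ¬ (T (r, c) = i ∧ T (r+1, c) = i + 1) := by
      rintro ⟨ha, hb⟩
      have := key (r, c) (r+1, c) h1 h2 ha hb
      simp at this
    split_ifs <;> omega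
  · intro k hk1 hk2
    by_cases h : k = i
    · obtain ⟨p, hp, hv⟩ := exists_cell hT (by omega : 1 ≤ i + 1) hi2
      refine ⟨p, hp, ?_⟩
      rw [swap_cell_eq lam i T hp, hv]
      split_ifs <;> omega
    · by_cases h' : k = i + 1
      · obtain ⟨p, hp, hv⟩ := exists_cell hT hi1 (by omega)
        refine ⟨p, hp, ?_⟩
        rw [swap_cell_eq lam i T hp, hv]
        split_ifs <;> omega
      · obtain ⟨p, hp, hv⟩ := exists_cell hT hk1 hk2
        refine ⟨p, hp, ?_⟩
        rw [swap_cell_eq lam i T hp, hv]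
        split_ifs <;> omega

lemma piOp_single (lam : ℕ → ℕ) (i : ℕ) (T' : ℕ × ℕ → ℕ) :
    piOp lam i (Finsupp.single T' (1 : ℂ)) =
      (if ¬ IsDescent lam T' i then Finsupp.single T' (1 : ℂ)
       else if IsAttacking lam T' i then 0
       else Finsupp.single (swapTab lam i T') (1 : ℂ)) := by
  simp [piOp, Finsupp.lsum_single, LinearMap.toSpanSingleton_apply]

/-- If `T` has an inversion at `i` then `T` is not a source tableau. -/
lemma not_source_of_inversion (hlam : IsPartitionOf n lam) (hT : IsIGLT lam m T)
    (hi1 : 1 ≤ i) (hi2 : i + 1 ≤ m) (hinv : rbot lam T (i + 1) < rtop lam T i) :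
    ∃ T', IsIGLT lam m T' ∧ T' ≠ T ∧ 1 ≤ i ∧ i ≤ m - 1 ∧
      piOp lam i (Finsupp.single T' (1 : ℂ)) = Finsupp.single T (1 : ℂ) := by
  have hUigl : IsIGLT lam m (swapTab lam i T) := swap_IGLT hlam hT hi1 hi2 hinv
  have hcw_i : cellsWith lam (swapTab lam i T) i = cellsWith lam T (i+1) := cellsWith_swap_i lam i T
  have hcw_i1 : cellsWith lam (swapTab lam i T) (i+1) = cellsWith lam T i := cellsWith_swap_i1 lam i T
  have hbounds_i := rbot_eq_of_cellsWith hcw_i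
  have hbounds_i1 := rbot_eq_of_cellsWith hcw_i1
  have hdesc : IsDescent lam (swapTab lam i T) i := by
    unfold IsDescent
    rw [hbounds_i.2.1, hbounds_i1.1]
    have h1 : rtop lam T (i+1) ≤ rbot lam T (i+1) := rtop_le_rbot hlam hT (by omega) hi2
    have h2 : rtop lam T i ≤ rbot lam T i := rtop_le_rbot hlam hT hi1 (by omega)
    omega
  have hatt : ¬ IsAttacking lam (swapTab lam i T) i := by
    rintro ⟨-, hcase⟩
    rcases hcase with ⟨r, c, hc1, hc2, hv1, hv2⟩ | ⟨p, hp, hv, hle⟩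
    · -- U(r,c) = i means T(r,c) = i+1; U(r+1,c) = i+1 means T(r+1,c) = i
      have ha : T (r, c) = i + 1 := by
        have := hv1; rw [swap_cell_eq lam i T hc1] at this
        split_ifs at this <;> omega
      have hb : T (r+1, c) = i := by
        have := hv2; rw [swap_cell_eq lam i T hc2] at this
        split_ifs at this <;> omega
      have := col_lt hlam hT hc1 hc2 (by omega : r < r + 1)
      omega
    · -- U p = i+1 means T p = i, so p.1 ≥ rtop T i > rbot T (i+1) = rbot U i
      have ha : T p = i := by
        have := hv; rw [swap_cell_eq lam i T hp] at this
        split_ifs at this <;> omega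
      have h1 := row_ge_rtop hp ha
      rw [hbounds_i.1] at hle
      omega
  refine ⟨swapTab lam i T, hUigl, ?_, hi1, by omega, ?_⟩
  · exact fun h => swap_ne hT hi1 (by omega) h
  · rw [piOp_single, if_neg (not_not_intro hdesc), if_neg hatt, swap_swap hT]

/-- If `T` is reached by some `π_i` from another IGLT then `T` has an inversion. -/
lemma inversion_of_not_source (hlam : IsPartitionOf n lam) (hT : IsIGLT lam m T)
    {T' : ℕ × ℕ → ℕ} {i : ℕ} (hT' : IsIGLT lam m T') (hne : T' ≠ T)
    (hi1 : 1 ≤ i) (hi2 : i ≤ m - 1) (hm : 1 ≤ m)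
    (hpi : piOp lam i (Finsupp.single T' (1 : ℂ)) = Finsupp.single T (1 : ℂ)) :
    rbot lam T (i + 1) < rtop lam T i := by
  rw [piOp_single] at hpi
  by_cases hdesc : IsDescent lam T' i
  · rw [if_neg (not_not_intro hdesc)] at hpi
    by_cases hatt : IsAttacking lam T' i
    · rw [if_pos hatt] at hpi
      exact absurd hpi.symm (by simp)
    · rw [if_neg hatt] at hpi
      have hTeq : swapTab lam i T' = T := by
        by_contra h
        have := Finsupp.single_left_injective (α := ℕ × ℕ → ℕ) (one_ne_zero (α := ℂ)) hpi
        exact h this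
      -- T = swap T' : cellsWith T i = cellsWith T' (i+1), etc.
      have hcw_i : cellsWith lam T i = cellsWith lam T' (i+1) := by
        rw [← hTeq]; exact cellsWith_swap_i lam i T'
      have hcw_i1 : cellsWith lam T (i+1) = cellsWith lam T' i := by
        rw [← hTeq]; exact cellsWith_swap_i1 lam i T'
      have hb_i := rbot_eq_of_cellsWith hcw_i
      have hb_i1 := rbot_eq_of_cellsWith hcw_i1
      -- non-attacking: all cells of T' with value i+1 lie strictly below rbot T' i
      rw [hb_i.2.1, hb_i1.1]
      -- goal : rbot T' i < rtop T' (i+1)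
      unfold IsAttacking at hatt
      push_neg at hatt
      have h2 := hatt hdesc
      -- rtop T' (i+1) is the row of some cell with value i+1
      have hmem := rtop_mem hT' (by omega : 1 ≤ i + 1) (by omega : i + 1 ≤ m)
      obtain ⟨c, hc, hv⟩ := hmem
      have := h2.2 (rtop lam T' (i+1), c) hc hv
      simpa using this
  · rw [if_pos hdesc] at hpi
    exact absurd (Finsupp.single_left_injective (α := ℕ × ℕ → ℕ) (one_ne_zero (α := ℂ)) hpi) hne

/-- characterization: `T` is a source iff it has no inversion -/
lemma source_iff (hlam : IsPartitionOf n lam) (hT : IsIGLT lam m T) (hm : 1 ≤ m) :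
    IsSourceTab lam m T ↔ ∀ i, 1 ≤ i → i + 1 ≤ m → rtop lam T i ≤ rbot lam T (i + 1) := by
  constructor
  · rintro ⟨-, hsrc⟩ i h1 h2
    by_contra h
    push_neg at h
    obtain ⟨T', a1, a2, a3, a4, a5⟩ := not_source_of_inversion hlam hT h1 h2 h
    exact hsrc ⟨T', i, a1, a2, a3, a4, a5⟩
  · intro h
    refine ⟨hT, ?_⟩
    rintro ⟨T', i, hT', hne, hi1, hi2, hpi⟩
    have := inversion_of_not_source hlam hT hT' hne hi1 hi2 hm hpi
    have := h i hi1 (by omega)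
    omega

end Swap
/-! ### Lattice path machinery -/

section Path

variable {n m : ℕ} {lam : ℕ → ℕ} {T : ℕ × ℕ → ℕ} {i : ℕ}

/-- an up-step forces the column to be `theta r` -/
lemma up_forces_theta (hlam : IsPartitionOf n lam) (hT : IsIGLT lam m T) {r c : ℕ}
    (hr : 1 ≤ r) (hlt : entryLt lam T i (r, c)) (hge : entryGe lam T i (r, c + 1)) :
    c = theta lam T i r := by
  have hub : ¬ (c + 1 ≤ theta lam T i r) := by
    intro hc
    obtain ⟨hcell, hval⟩ := theta_cell hlam hT hr (by omega) hc
    exact absurd (hge hcell) (by omega)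
  rcases hlt with h | h | ⟨hcell, hval⟩
  · simp at h; omega
  · simp only at h
    subst h
    omega
  · have := (theta_prefix hlam hT hcell).mp hval
    omega

/-- along a chain: rows weakly decrease, columns weakly increase, and
`col - row` increases by exactly the index difference. -/
lemma chain_steps {P : List (ℕ × ℕ)} (hc : List.Chain' (gammaStep lam T i) P)
    {a b : ℕ} (hab : a ≤ b) (hb : b < P.length) (ha : a < P.length) :
    P[b].1 ≤ P[a].1 ∧ P[a].2 ≤ P[b].2 ∧
      (P[b].2 : ℤ) - P[b].1 = (P[a].2 : ℤ) - P[a].1 + (b - a : ℕ) := by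
  induction b with
  | zero =>
    have : a = 0 := by omega
    subst this; simp
  | succ k ih =>
    rcases Nat.eq_or_lt_of_le hab with h | h
    · subst h; simp
    · have hk : k < P.length := by omega
      have hak : a ≤ k := by omega
      obtain ⟨i1, i2, i3⟩ := ih hak hk
      have hstep : gammaStep lam T i P[k] P[k+1] := by
        have := List.isChain_iff_getElem.mp hc k (by omega)
        simpa using this
      have hd : P[k+1].1 ≤ P[k].1 ∧ P[k].2 ≤ P[k+1].2 ∧
          (P[k+1].2 : ℤ) - P[k+1].1 = (P[k].2 : ℤ) - P[k].1 + 1 := by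
        rcases hstep with ⟨hp1, hq, -, -⟩ | ⟨hq, -, -⟩
        · rw [hq]
          simp only
          constructor
          · omega
          constructor
          · omega
          · have : ((P[k].1 - 1 : ℕ) : ℤ) = (P[k].1 : ℤ) - 1 := by omega
            rw [this]; ring
        · rw [hq]
          simp only
          refine ⟨le_refl _, by omega, ?_⟩
          push_cast; ring
      refine ⟨by omega, by omega, ?_⟩
      rw [hd.2.2, i3]
      have : ((k + 1 - a : ℕ) : ℤ) = ((k - a : ℕ) : ℤ) + 1 := by omega
      rw [this]; ring

/-- two members of a chain at consecutive diagonals are joined by a step -/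
lemma mem_consec {P : List (ℕ × ℕ)} (hc : List.Chain' (gammaStep lam T i) P)
    {x y : ℕ × ℕ} (hx : x ∈ P) (hy : y ∈ P)
    (hd : (y.2 : ℤ) - y.1 = (x.2 : ℤ) - x.1 + 1) : gammaStep lam T i x y := by
  obtain ⟨a, ha, rfl⟩ := List.mem_iff_getElem.mp hx
  obtain ⟨b, hb, rfl⟩ := List.mem_iff_getElem.mp hy
  rcases le_or_gt a b with h | h
  · obtain ⟨-, -, h3⟩ := chain_steps hc h hb ha
    have hba : b = a + 1 := by
      rw [hd] at h3
      have : ((b - a : ℕ) : ℤ) = 1 := by omega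
      omega
    subst hba
    have := List.isChain_iff_getElem.mp hc a (by omega)
    simpa using this
  · obtain ⟨-, -, h3⟩ := chain_steps hc (le_of_lt h) ha hb
    exfalso
    rw [hd] at h3
    have : ((a - b : ℕ) : ℤ) = -1 := by omega
    omega

/-- a chain which starts at row ≥ r and ends at row < r contains an up-step crossing row r -/
lemma crossing : ∀ (P : List (ℕ × ℕ)) (hne : P ≠ [])
    (_ : List.Chain' (gammaStep lam T i) P) {r : ℕ}
    (_ : r ≤ (P.head hne).1) (_ : (P.getLast hne).1 < r),
    ∃ c, (r, c) ∈ P ∧ (r - 1, c) ∈ P ∧ entryLt lam T i (r, c) ∧ entryGe lam T i (r, c + 1)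
  | [], hne => by simp at hne
  | [x], hne => by
    intro hchain r hhead hlast
    simp only [List.head_cons, List.getLast_singleton] at hhead hlast
    omega
  | x :: y :: t, hne => by
    intro hchain r hhead hlast
    have hstep : gammaStep lam T i x y := (List.isChain_cons.mp hchain).1 y rfl
    have hchain' : List.Chain' (gammaStep lam T i) (y :: t) := (List.isChain_cons_cons.mp hchain).2
    simp only [List.head_cons] at hhead
    by_cases hy : y.1 < r
    · rcases hstep with ⟨hp1, hq, hl, hg⟩ | ⟨hq, hl, hg⟩
      · have hx1 : x.1 = r := by
          rw [hq] at hy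
          simp only at hy
          omega
        refine ⟨x.2, ?_, ?_, ?_, ?_⟩
        · rw [← hx1]; simp
        · have : y = (r - 1, x.2) := by rw [hq, hx1]
          rw [← this]; simp
        · rw [← hx1]; convert hl
        · rw [← hx1]; convert hg
      · exfalso
        rw [hq] at hy
        simp only at hy
        omega
    · push_neg at hy
      have hne' : y :: t ≠ [] := by simp
      have hlast' : ((y :: t).getLast hne').1 < r := by
        have : (x :: y :: t).getLast hne = (y :: t).getLast hne' := by
          rw [List.getLast_cons]
        rw [← this]; exact hlast
      obtain ⟨c, m1, m2, m3, m4⟩ := crossing (y :: t) hne' hchain' (by simpa using hy) hlast'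
      exact ⟨c, List.mem_cons_of_mem x m1, List.mem_cons_of_mem x m2, m3, m4⟩

end Path
/-! ### The canonical path: existence of gamma paths -/

section CanonPath

variable {n m : ℕ} {lam : ℕ → ℕ} {T : ℕ × ℕ → ℕ} {i : ℕ}

/-- horizontal run at lattice row `r`, columns `a` to `a+k` -/
def hseg (r a : ℕ) : ℕ → List (ℕ × ℕ)
  | 0 => [(r, a)]
  | k + 1 => hseg r a k ++ [(r, a + (k + 1))]

lemma hseg_ne (r a k : ℕ) : hseg r a k ≠ [] := by
  cases k <;> simp [hseg]

lemma hseg_head (r a k : ℕ) : (hseg r a k).head? = some (r, a) := by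
  induction k with
  | zero => simp [hseg]
  | succ k ih =>
    rw [hseg, List.head?_append, ih]
    simp

lemma hseg_last (r a k : ℕ) : (hseg r a k).getLast? = some (r, a + k) := by
  cases k with
  | zero => simp [hseg]
  | succ k => rw [hseg, List.getLast?_concat]

lemma hseg_mem {r a k : ℕ} {p : ℕ × ℕ} (hp : p ∈ hseg r a k) :
    p.1 = r ∧ a ≤ p.2 ∧ p.2 ≤ a + k := by
  induction k with
  | zero => simp [hseg] at hp; simp [hp]
  | succ k ih =>
    rw [hseg, List.mem_append] at hp
    rcases hp with h | h
    · have := ih h; omega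
    · simp at h; simp [h]

lemma hseg_chain (hcond : ∀ c, a ≤ c → c < a + k →
    entryLt lam T i (r, c + 1) ∧ entryGe lam T i (r + 1, c + 1)) :
    List.Chain' (gammaStep lam T i) (hseg r a k) := by
  induction k with
  | zero => simp [hseg, List.Chain']
  | succ k ih =>
    rw [hseg, List.Chain', List.isChain_append]
    refine ⟨ih (fun c h1 h2 => hcond c h1 (by omega)), by simp, ?_⟩
    intro x hx y hy
    rw [hseg_last] at hx
    simp at hx hy
    subst hx; subst hy
    right
    refine ⟨by simp; omega, ?_, ?_⟩
    · have := hcond (a + k) (by omega) (by omega)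
      simpa [Nat.add_assoc] using this.1
    · have := hcond (a + k) (by omega) (by omega)
      simpa [Nat.add_assoc] using this.2

/-- target column at lattice row r -/
def canonX (lam : ℕ → ℕ) (T : ℕ × ℕ → ℕ) (i r : ℕ) : ℕ :=
  if r < rtop lam T i then ctop lam T i else theta lam T i r

def canonAux (lam : ℕ → ℕ) (T : ℕ × ℕ → ℕ) (i : ℕ) : ℕ → List (ℕ × ℕ)
  | 0 => [(rbot lam T i, theta lam T i (rbot lam T i))]
  | t + 1 => canonAux lam T i t ++
      hseg (rbot lam T i - (t + 1)) (theta lam T i (rbot lam T i - t))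
        (canonX lam T i (rbot lam T i - (t + 1)) - theta lam T i (rbot lam T i - t))

lemma canonAux_spec (hlam : IsPartitionOf n lam) (hT : IsIGLT lam m T)
    (h1 : 1 ≤ i) (h2 : i ≤ m) :
    ∀ t, t ≤ rbot lam T i - rtop lam T i + 1 →
    canonAux lam T i t ≠ [] ∧
    (canonAux lam T i t).head? = some (rbot lam T i, theta lam T i (rbot lam T i)) ∧
    (canonAux lam T i t).getLast? =
      some (rbot lam T i - t, canonX lam T i (rbot lam T i - t)) ∧
    List.Chain' (gammaStep lam T i) (canonAux lam T i t) := by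
  have hrt1 : 1 ≤ rtop lam T i := (top_cell hT h1 h2).1.1
  have hrtb : rtop lam T i ≤ rbot lam T i := rtop_le_rbot hlam hT h1 h2
  have hctop := theta_rtop hlam hT h1 h2
  intro t ht
  induction t with
  | zero =>
    refine ⟨by simp [canonAux], by simp [canonAux], ?_, by simp [canonAux, List.Chain']⟩
    simp only [canonAux, Nat.sub_zero, List.getLast?_singleton]
    rw [canonX, if_neg (by omega)]
  | succ t ih =>
    obtain ⟨ine, ihead, ilast, ichain⟩ := ih (by omega)
    set r := rbot lam T i - (t + 1) with hr
    have hr1 : rbot lam T i - t = r + 1 := by omega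
    have hrub : r + 1 ≥ rtop lam T i := by omega
    -- previous theta value
    have hprev : canonX lam T i (r + 1) = theta lam T i (r + 1) := by
      rw [canonX, if_neg (by omega)]
    -- the top-row case or regular case: theta (r+1) ≤ canonX r
    have hXle : theta lam T i (r + 1) ≤ canonX lam T i r := by
      rw [canonX]
      split_ifs with hcase
      · -- r < rtop, so r = rtop - 1 and r + 1 = rtop
        have : r + 1 = rtop lam T i := by omega
        rw [this, hctop.1]
        omega
      · exact theta_mono hlam hT (by omega)
    -- conditions for the horizontal segment at row r
    have hcond : ∀ c, theta lam T i (r + 1) ≤ c → c < theta lam T i (r + 1) +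
        (canonX lam T i r - theta lam T i (r + 1)) →
        entryLt lam T i (r, c + 1) ∧ entryGe lam T i (r + 1, c + 1) := by
      intro c hc1 hc2
      have hcX : c + 1 ≤ canonX lam T i r := by omega
      constructor
      · -- entryLt at (r, c+1)
        by_cases hcase : r < rtop lam T i
        · -- top row: r = rtop - 1
          have hreq : r + 1 = rtop lam T i := by omega
          rw [canonX, if_pos hcase] at hcX
          rcases Nat.eq_zero_or_pos r with h0 | h0
          · left; simpa using h0
          · right; right
            obtain ⟨htc, htv⟩ := top_cell hT h1 h2
            have hcell : IsCell lam (r, c + 1) := by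
              have hcell2 : IsCell lam (r + 1, c + 1) := by
                rw [hreq]
                exact cell_left hlam htc (by omega) (by omega)
              exact cell_up hlam hcell2 h0 (by omega)
            refine ⟨hcell, ?_⟩
            have hcell2 : IsCell lam (r + 1, c + 1) := by
              rw [hreq]; exact cell_left hlam htc (by omega) (by omega)
            have hctcell : IsCell lam (r + 1, ctop lam T i) := by rw [hreq]; exact htc
            have hlt2 : T (r + 1, c + 1) ≤ i := by
              rcases Nat.eq_or_lt_of_le hcX with he | hlt
              · rw [hreq] at *
                have : c + 1 = ctop lam T i := he
                rw [this]
                have := htv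
                omega
              · have := row_lt hlam hT hcell2 hctcell (by omega)
                rw [hreq] at this ⊢
                have := htv
                omega
            have := col_lt hlam hT hcell hcell2 (by omega)
            omega
        · -- regular row: c + 1 ≤ theta r
          rw [canonX, if_neg hcase] at hcX
          obtain ⟨hcell, hval⟩ := theta_cell hlam hT (by omega) (by omega) hcX
          right; right; exact ⟨hcell, hval⟩
      · -- entryGe at (r+1, c+1)
        intro hcell
        by_contra hge
        push_neg at hge
        have := (theta_prefix hlam hT hcell).mp hge
        omega
    have hchainseg := hseg_chain (lam := lam) (T := T) (i := i)
      (r := r) (a := theta lam T i (r + 1))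
      (k := canonX lam T i r - theta lam T i (r + 1)) hcond
    constructor
    · simp only [canonAux]
      intro hcontra
      exact hseg_ne _ _ _ (List.append_eq_nil_iff.mp hcontra).2
    constructor
    · simp only [canonAux]
      rw [List.head?_append_of_ne_nil _ ine, ihead]
    constructor
    · simp only [canonAux]
      rw [← hr, List.getLast?_append_of_ne_nil _ (hseg_ne _ _ _), hr1, hseg_last]
      have heq : theta lam T i (r + 1) + (canonX lam T i r - theta lam T i (r + 1)) =
          canonX lam T i r := by omega
      rw [heq]
    · simp only [canonAux]
      rw [List.Chain', List.isChain_append]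
      refine ⟨ichain, by rw [hr1]; exact hchainseg, ?_⟩
      intro x hx y hy
      rw [ilast] at hx
      rw [hr1, hseg_head] at hy
      simp only [Option.mem_def, Option.some.injEq] at hx hy
      subst hx; subst hy
      -- up-step from (r+1, theta (r+1)) to (r, theta (r+1))
      left
      rw [hr1, hprev]
      refine ⟨?_, ?_, ?_, ?_⟩
      · show 1 ≤ r + 1
        omega
      · show (r, theta lam T i (r + 1)) = (r + 1 - 1, theta lam T i (r + 1))
        norm_num
      · -- entryLt at (r+1, theta (r+1))
        show entryLt lam T i (r + 1, theta lam T i (r + 1))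
        rcases Nat.eq_zero_or_pos (theta lam T i (r + 1)) with h0 | h0
        · right; left; simpa using h0
        · right; right
          exact theta_cell hlam hT (by omega) h0 (le_refl _)
      · -- entryGe at (r+1, theta (r+1) + 1)
        show entryGe lam T i (r + 1, theta lam T i (r + 1) + 1)
        intro hcell
        by_contra hge
        push_neg at hge
        have := (theta_prefix hlam hT hcell).mp hge
        omega

/-- every value has a gamma path: the canonical one -/
lemma canon_isGammaPath (hlam : IsPartitionOf n lam) (hT : IsIGLT lam m T)
    (h1 : 1 ≤ i) (h2 : i ≤ m) :
    IsGammaPath lam T i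
      {p | p ∈ canonAux lam T i (rbot lam T i - rtop lam T i + 1)} := by
  have hrt1 : 1 ≤ rtop lam T i := (top_cell hT h1 h2).1.1
  have hrtb : rtop lam T i ≤ rbot lam T i := rtop_le_rbot hlam hT h1 h2
  obtain ⟨hne, hhead, hlast, hchain⟩ :=
    canonAux_spec hlam hT h1 h2 (rbot lam T i - rtop lam T i + 1) (le_refl _)
  refine ⟨canonAux lam T i (rbot lam T i - rtop lam T i + 1), hne, ?_, ?_, hchain, rfl⟩
  · rw [hhead]
    congr 2
    exact (theta_rbot hlam hT h1 h2).1
  · rw [hlast]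
    have he : rbot lam T i - (rbot lam T i - rtop lam T i + 1) = rtop lam T i - 1 := by omega
    rw [he]
    congr 1
    rw [canonX, if_pos (by omega)]

end CanonPath
/-! ### Extraction from equality of gamma data -/

section Extract

variable {n m : ℕ} {lam : ℕ → ℕ} {T U : ℕ × ℕ → ℕ} {i j : ℕ}

lemma theta_eq_of_shared (hlam : IsPartitionOf n lam) (hT : IsIGLT lam m T)
    (hU : IsIGLT lam m U) (hi : 1 ≤ i) (him : i ≤ m) (hj : 1 ≤ j) (hjm : j ≤ m)
    (hcells : cellsWith lam T i = cellsWith lam U j) {V : Set (ℕ × ℕ)}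
    (hVT : IsGammaPath lam T i V) (hVU : IsGammaPath lam U j V) {r : ℕ}
    (hr1 : rtop lam T i ≤ r) (hr2 : r ≤ rbot lam T i) :
    theta lam T i r = theta lam U j r := by
  have hrt1 : 1 ≤ rtop lam T i := (top_cell hT hi him).1.1
  obtain ⟨P, hne, hhead, hlast, hchain, hVeq⟩ := hVT
  have hheadval : P.head hne = (rbot lam T i, cbot lam T i - 1) := by
    have := List.head?_eq_head hne
    rw [this] at hhead
    exact Option.some_injective _ hhead
  have hlastval : P.getLast hne = (rtop lam T i - 1, ctop lam T i) := by
    have := List.getLast?_eq_getLast hne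
    rw [this] at hlast
    exact Option.some_injective _ hlast
  obtain ⟨c, hm1, hm2, hm3, hm4⟩ := crossing P hne hchain
    (r := r) (by rw [hheadval]; exact hr2) (by rw [hlastval]; simp; omega)
  have hcT : c = theta lam T i r := up_forces_theta hlam hT (by omega) hm3 hm4
  -- now use the U-path
  obtain ⟨Q, hne', hhead', hlast', hchain', hVeq'⟩ := hVU
  have hmQ1 : (r, c) ∈ Q := by
    have : (r, c) ∈ V := by rw [hVeq]; exact hm1
    rw [hVeq'] at this; exact this
  have hmQ2 : (r - 1, c) ∈ Q := by
    have : (r - 1, c) ∈ V := by rw [hVeq]; exact hm2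
    rw [hVeq'] at this; exact this
  have hstep : gammaStep lam U j (r, c) (r - 1, c) := by
    apply mem_consec hchain' hmQ1 hmQ2
    simp only
    omega
  rcases hstep with ⟨-, -, hl, hg⟩ | ⟨hq, -, -⟩
  · rw [← hcT]
    exact up_forces_theta hlam hU (by omega) hl hg
  · exfalso
    have := congrArg Prod.snd hq
    simp only at this
    omega

/-- the starred band condition from a shared path -/
lemma star_of_shared (hlam : IsPartitionOf n lam) (hT : IsIGLT lam m T)
    (hU : IsIGLT lam m U) (hi : 1 ≤ i) (him : i ≤ m) (hj : 1 ≤ j) (hjm : j ≤ m)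
    (hcells : cellsWith lam T i = cellsWith lam U j) {V : Set (ℕ × ℕ)}
    (hVT : IsGammaPath lam T i V) (hVU : IsGammaPath lam U j V) {p : ℕ × ℕ}
    (hp : IsCell lam p) (hp1 : rtop lam T i ≤ p.1) (hp2 : p.1 ≤ rbot lam T i) :
    (T p < i ↔ U p < j) := by
  have := theta_eq_of_shared hlam hT hU hi him hj hjm hcells hVT hVU hp1 hp2
  rcases p with ⟨r, c⟩
  rw [theta_prefix hlam hT hp, theta_prefix hlam hU hp]
  simp only at this ⊢
  rw [this]

/-- transfer of a multicell block through equality of gamma data -/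
lemma block_transfer (hlam : IsPartitionOf n lam) (hT : IsIGLT lam m T)
    (hU : IsIGLT lam m U) (hg : gammaData lam T = gammaData lam U)
    (hmul : hasMultiple lam T i) :
    ∃ j, 1 ≤ j ∧ j ≤ m ∧ cellsWith lam T i = cellsWith lam U j ∧
      hasMultiple lam U j ∧
      ∃ V, IsGammaPath lam T i V ∧ IsGammaPath lam U j V := by
  obtain ⟨p, q, hpq, hp, hq⟩ := hmul
  have hi : 1 ≤ i ∧ i ≤ m := by
    have := hT.2.1 p hp.1
    rw [hp.2] at this
    exact this
  have hpath := canon_isGammaPath hlam hT hi.1 hi.2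
  have hmem : (⟨{p | p ∈ canonAux lam T i (rbot lam T i - rtop lam T i + 1)},
      cellsWith lam T i⟩ : Set (ℕ × ℕ) × Set (ℕ × ℕ)) ∈ gammaData lam T :=
    ⟨i, ⟨p, q, hpq, hp, hq⟩, hpath, rfl⟩
  rw [hg] at hmem
  obtain ⟨j, hmul', hpath', hcells⟩ := hmem
  simp only at hpath' hcells
  have hj : 1 ≤ j ∧ j ≤ m := by
    obtain ⟨p', q', hpq', hp', hq'⟩ := hmul'
    have := hU.2.1 p' hp'.1
    rw [hp'.2] at this
    exact this
  exact ⟨j, hj.1, hj.2, hcells, hmul', _, hpath, hpath'⟩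

/-- two tableaux with equal gamma data have the same partition into blocks -/
lemma blocks_pointwise (hlam : IsPartitionOf n lam) (hT : IsIGLT lam m T)
    (hU : IsIGLT lam m U) (hg : gammaData lam T = gammaData lam U) :
    ∀ p q : ℕ × ℕ, IsCell lam p → IsCell lam q → (T p = T q ↔ U p = U q) := by
  have key : ∀ (T' U' : ℕ × ℕ → ℕ), IsIGLT lam m T' → IsIGLT lam m U' →
      gammaData lam T' = gammaData lam U' →
      ∀ p q : ℕ × ℕ, IsCell lam p → IsCell lam q → T' p = T' q → U' p = U' q := by
    intro T' U' hT' hU' hg' p q hp hq hval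
    by_cases hpq : p = q
    · rw [hpq]
    · have hmul : hasMultiple lam T' (T' p) :=
        ⟨p, q, hpq, ⟨hp, rfl⟩, ⟨hq, hval.symm⟩⟩
      obtain ⟨j, -, -, hcells, -, -⟩ := block_transfer hlam hT' hU' hg' hmul
      have h1 : p ∈ cellsWith lam U' j := hcells ▸ (⟨hp, rfl⟩ : p ∈ cellsWith lam T' (T' p))
      have h2 : q ∈ cellsWith lam U' j :=
        hcells ▸ (⟨hq, hval.symm⟩ : q ∈ cellsWith lam T' (T' p))
      rw [h1.2, h2.2]
  intro p q hp hq
  exact ⟨key T U hT hU hg p q hp hq, key U T hU hT hg.symm p q hp hq⟩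

/-- the band condition for all corresponding multicell blocks -/
lemma star_all (hlam : IsPartitionOf n lam) (hT : IsIGLT lam m T)
    (hU : IsIGLT lam m U) (hg : gammaData lam T = gammaData lam U)
    {v w : ℕ} (hcw : cellsWith lam T v = cellsWith lam U w)
    (hmul : hasMultiple lam T v) :
    ∀ p : ℕ × ℕ, IsCell lam p → rtop lam T v ≤ p.1 → p.1 ≤ rbot lam T v →
      (T p < v ↔ U p < w) := by
  obtain ⟨j, hj1, hj2, hcells, hmul', V, hVT, hVU⟩ := block_transfer hlam hT hU hg hmul
  have hjw : j = w := by
    obtain ⟨p, q, hpq, hp, hq⟩ := hmul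
    have h1 : p ∈ cellsWith lam U j := hcells ▸ hp
    have h2 : p ∈ cellsWith lam U w := hcw ▸ hp
    rw [← h1.2, ← h2.2]
  subst hjw
  have hv : 1 ≤ v ∧ v ≤ m := by
    obtain ⟨p, q, hpq, hp, hq⟩ := hmul
    have := hT.2.1 p hp.1
    rw [hp.2] at this
    exact this
  intro p hp h1 h2
  exact star_of_shared hlam hT hU hv.1 hv.2 hj1 hj2 hcells hVT hVU hp h1 h2

end Extract
/-! ### Uniqueness: two sorted tableaux with the same gamma data are equal -/

section Uniq

variable {n m : ℕ} {lam : ℕ → ℕ} {T U : ℕ × ℕ → ℕ}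

lemma single_block (hlam : IsPartitionOf n lam) (hT : IsIGLT lam m T) {v : ℕ}
    (hv1 : 1 ≤ v) (hv2 : v ≤ m) (hns : ¬ hasMultiple lam T v) :
    rtop lam T v = rbot lam T v := by
  by_contra hne
  have h1 := top_cell hT hv1 hv2
  have h2 := bot_cell hlam hT hv1 hv2
  have hle := rtop_le_rbot hlam hT hv1 hv2
  exact hns ⟨_, _, fun hc => hne (congrArg Prod.fst hc), ⟨h1.1, h1.2⟩, ⟨h2.1, h2.2⟩⟩

/-- the asymmetric main case of the uniqueness step -/
lemma step_asym (hlam : IsPartitionOf n lam) (hT : IsIGLT lam m T) (hU : IsIGLT lam m U)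
    (hg : gammaData lam T = gammaData lam U)
    (hcU : ∀ i, 1 ≤ i → i + 1 ≤ m → rtop lam U i ≤ rbot lam U (i + 1))
    {v : ℕ} (hv1 : 1 ≤ v) (hv2 : v ≤ m)
    (hcomm : ∀ w, v < w → w ≤ m → cellsWith lam T w = cellsWith lam U w)
    (hpw : ∀ p q : ℕ × ℕ, IsCell lam p → IsCell lam q → (T p = T q ↔ U p = U q))
    (hne : cellsWith lam T v ≠ cellsWith lam U v)
    (hlt : rbot lam U v < rbot lam T v) : False := by
  have hblock : ∀ p : ℕ × ℕ, IsCell lam p → cellsWith lam T (T p) = cellsWith lam U (U p) := by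
    intro p hp
    ext q
    simp only [cellsWith, Set.mem_setOf_eq]
    constructor
    · rintro ⟨hq, hv⟩
      exact ⟨hq, (hpw q p hq hp).mp hv⟩
    · rintro ⟨hq, hv⟩
      exact ⟨hq, (hpw q p hq hp).mpr hv⟩
  -- the block of value v in T, and its U-value k
  obtain ⟨pM, hpM, hvM⟩ := exists_cell hT hv1 hv2
  set k := U pM with hk
  have hMk : cellsWith lam T v = cellsWith lam U k := by
    rw [← hvM, hk]; exact hblock pM hpM
  have hkrange : 1 ≤ k ∧ k ≤ m := hU.2.1 pM hpM
  have hkv : k < v := by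
    rcases Nat.lt_trichotomy k v with h | h | h
    · exact h
    · exact absurd (h ▸ hMk) hne
    · exfalso
      have := hcomm k h hkrange.2
      have hpMk : pM ∈ cellsWith lam T k := by
        rw [this, ← hMk]; exact ⟨hpM, hvM⟩
      have : T pM = k := hpMk.2
      omega
  -- bounds of the block M transfer
  obtain ⟨hrbMk, hrtMk, -, -⟩ := rbot_eq_of_cellsWith hMk
  -- (F): blocks with U-values in (k, v] avoid the band of M
  have hF : hasMultiple lam T v → ∀ s, k < s → s ≤ v → ∀ q : ℕ × ℕ, IsCell lam q →
      U q = s → ¬ (rtop lam T v ≤ q.1 ∧ q.1 ≤ rbot lam T v) := by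
    intro hmul s hs1 hs2 q hq hUq ⟨hb1, hb2⟩
    have hstar := star_all hlam hT hU hg hMk hmul q hq hb1 hb2
    have hTq : ¬ T q < v := by
      intro h
      have := hstar.mp h
      omega
    push_neg at hTq
    rcases Nat.eq_or_lt_of_le hTq with h | h
    · have : q ∈ cellsWith lam U k := by
        rw [← hMk]; exact ⟨hq, h.symm⟩
      have := this.2
      omega
    · have hTqm : T q ≤ m := (hT.2.1 q hq).2
      have := hcomm (T q) h hTqm
      have hmem : q ∈ cellsWith lam U (T q) := by rw [← this]; exact ⟨hq, rfl⟩
      have := hmem.2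
      omega
  -- s* := greatest s ≤ v with k ≤ s and rbot T v ≤ rbot U s
  classical
  set P : ℕ → Prop := fun s => k ≤ s ∧ rbot lam T v ≤ rbot lam U s with hP
  have hPk : P k := ⟨le_refl k, by rw [hrbMk]⟩
  set s := Nat.findGreatest P v with hs
  have hsk : k ≤ s := by
    have h1 : P s := Nat.findGreatest_spec (le_of_lt hkv) hPk
    exact h1.1
  have hsP : P s := Nat.findGreatest_spec (le_of_lt hkv) hPk
  have hsv : s ≤ v := by rw [hs]; exact Nat.findGreatest_le v
  have hssv : s < v := by
    rcases Nat.eq_or_lt_of_le hsv with h | h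
    · exfalso
      have := hsP.2
      rw [h] at this
      omega
    · exact h
  have hnextP : ¬ P (s + 1) := Nat.findGreatest_is_greatest (P := P) (n := v) (by omega) (by omega)
  have hnext : rbot lam U (s + 1) < rbot lam T v := by
    by_contra h
    push_neg at h
    exact hnextP ⟨by omega, h⟩
  have hcUs : rtop lam U s ≤ rbot lam U (s + 1) := hcU s (by omega) (by omega)
  rcases Nat.eq_or_lt_of_le hsk with hsk' | hsk'
  · -- s = k
    rw [hsk'] at hrtMk hrbMk
    by_cases hmul : hasMultiple lam T v
    · -- bot cell of U-value s+1 is in the band of M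
      obtain ⟨hqcell, hqval⟩ := bot_cell hlam hU (i := s + 1) (by omega) (by omega)
      refine hF hmul (s + 1) (by omega) (by omega) _ hqcell hqval ⟨?_, ?_⟩
      · have : rtop lam T v = rtop lam U s := hrtMk
        simp only
        omega
      · simp only
        omega
    · have := single_block hlam hT hv1 hv2 hmul
      omega
  · -- s > k : straddling block
    have hrts : rtop lam U s < rbot lam T v := by omega
    have hXmul : hasMultiple lam U s := by
      by_contra hns
      have := single_block hlam hU (v := s) (by omega) (by omega) hns
      omega
    -- T-value of the straddler
    obtain ⟨hXc, hXv⟩ := top_cell hU (i := s) (by omega) (by omega)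
    set t := T (rtop lam U s, ctop lam U s) with ht
    have hXt : cellsWith lam U s = cellsWith lam T t := by
      rw [← hXv, ht]; exact (hblock _ hXc).symm
    -- apply the band condition of the straddler to the bottom cell of M
    obtain ⟨hbc, hbv⟩ := bot_cell hlam hT hv1 hv2
    have hstar := star_all hlam hU hT hg.symm hXt hXmul
      (rbot lam T v, cbot lam T v) hbc (by simp only; omega) (by simp only; omega)
    have hUb : U (rbot lam T v, cbot lam T v) = k := by
      have : (rbot lam T v, cbot lam T v) ∈ cellsWith lam U k := by
        rw [← hMk]; exact ⟨hbc, hbv⟩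
      exact this.2
    have hvt : v < t := by
      have := hstar.mp (by omega : U (rbot lam T v, cbot lam T v) < s)
      omega
    have htm : t ≤ m := by
      have := hT.2.1 _ hXc
      omega
    have := hcomm t hvt htm
    have hmem : (rtop lam U s, ctop lam U s) ∈ cellsWith lam U t := by
      rw [← this]; exact ⟨hXc, rfl⟩
    have := hmem.2
    omega

/-- one induction step of the uniqueness argument -/
lemma step_core (hlam : IsPartitionOf n lam) (hT : IsIGLT lam m T) (hU : IsIGLT lam m U)
    (hg : gammaData lam T = gammaData lam U)
    (hcT : ∀ i, 1 ≤ i → i + 1 ≤ m → rtop lam T i ≤ rbot lam T (i + 1))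
    (hcU : ∀ i, 1 ≤ i → i + 1 ≤ m → rtop lam U i ≤ rbot lam U (i + 1))
    {v : ℕ} (hv1 : 1 ≤ v) (hv2 : v ≤ m)
    (hcomm : ∀ w, v < w → w ≤ m → cellsWith lam T w = cellsWith lam U w) :
    cellsWith lam T v = cellsWith lam U v := by
  have hpw := blocks_pointwise hlam hT hU hg
  by_contra hne
  rcases Nat.lt_trichotomy (rbot lam U v) (rbot lam T v) with h | h | h
  · exact step_asym hlam hT hU hg hcU hv1 hv2 hcomm hpw hne h
  · -- equal bottom rows: compare bottom cells
    obtain ⟨hMc, hMv⟩ := bot_cell hlam hT hv1 hv2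
    obtain ⟨hNc, hNv⟩ := bot_cell hlam hU hv1 hv2
    -- U-value of M's bottom cell
    have hUk : U (rbot lam T v, cbot lam T v) ≠ v := by
      intro hUk
      apply hne
      ext q
      simp only [cellsWith, Set.mem_setOf_eq]
      constructor
      · rintro ⟨hq, hval⟩
        refine ⟨hq, ?_⟩
        have := (hpw q (rbot lam T v, cbot lam T v) hq hMc).mp (by rw [hval, hMv])
        rw [this, hUk]
      · rintro ⟨hq, hval⟩
        refine ⟨hq, ?_⟩
        have := (hpw q (rbot lam T v, cbot lam T v) hq hMc).mpr (by rw [hval, hUk])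
        rw [this, hMv]
    rcases Nat.lt_trichotomy (cbot lam T v) (cbot lam U v) with hc | hc | hc
    · -- T value at N's bottom cell is < v but also... use row_lt in T
      have hNc' : IsCell lam (rbot lam T v, cbot lam T v) := hMc
      have hNc2 : IsCell lam (rbot lam T v, cbot lam U v) := by
        rw [h] at hNc; exact hNc
      have := row_lt hlam hT hNc' hNc2 hc
      rw [hMv] at this
      -- T at N's bottom cell > v; but N's bottom cell has U-value v;
      -- its T-value l: since T q > v, q in common block, so U q = T q > v, contra
      have hq : IsCell lam (rbot lam U v, cbot lam U v) := hNc
      have hTq : v < T (rbot lam U v, cbot lam U v) := by rw [h]; exact this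
      have hTm : T (rbot lam U v, cbot lam U v) ≤ m := (hT.2.1 _ hq).2
      have hcm := hcomm _ hTq hTm
      have hmem : (rbot lam U v, cbot lam U v) ∈ cellsWith lam U (T (rbot lam U v, cbot lam U v)) := by
        rw [← hcm]; exact ⟨hq, rfl⟩
      have := hmem.2
      omega
    · -- same cell: same block, so v-blocks equal, contra hne
      apply hUk
      rw [hc, ← h]
      exact hNv
    · -- U value at M's bottom cell: row_lt in U
      have hMc2 : IsCell lam (rbot lam U v, cbot lam T v) := by
        rw [← h] at hMc; exact hMc
      have := row_lt hlam hU hNc hMc2 hc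
      rw [hNv] at this
      -- U at M's bottom cell > v, so common block: T value there = U value > v, contra T = v
      have hq : IsCell lam (rbot lam T v, cbot lam T v) := hMc
      have hUq : v < U (rbot lam T v, cbot lam T v) := by rw [← h]; exact this
      have hUm : U (rbot lam T v, cbot lam T v) ≤ m := (hU.2.1 _ hq).2
      have hcm := hcomm _ hUq hUm
      have hmem : (rbot lam T v, cbot lam T v) ∈ cellsWith lam T (U (rbot lam T v, cbot lam T v)) := by
        rw [hcm]
        exact ⟨hq, rfl⟩
      have := hmem.2
      omega
  · -- symmetric case
    have hpw' : ∀ p q : ℕ × ℕ, IsCell lam p → IsCell lam q → (U p = U q ↔ T p = T q) :=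
      fun p q hp hq => (hpw p q hp hq).symm
    exact step_asym hlam hU hT hg.symm hcT hv1 hv2
      (fun w hw1 hw2 => (hcomm w hw1 hw2).symm) hpw' (fun hh => hne hh.symm) h

/-- two sorted tableaux with the same gamma data are equal -/
lemma uniq_core (hlam : IsPartitionOf n lam) (hT : IsIGLT lam m T) (hU : IsIGLT lam m U)
    (hg : gammaData lam T = gammaData lam U)
    (hcT : ∀ i, 1 ≤ i → i + 1 ≤ m → rtop lam T i ≤ rbot lam T (i + 1))
    (hcU : ∀ i, 1 ≤ i → i + 1 ≤ m → rtop lam U i ≤ rbot lam U (i + 1)) :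
    T = U := by
  have main : ∀ d v, 1 ≤ v → v ≤ m → m - v ≤ d → cellsWith lam T v = cellsWith lam U v := by
    intro d
    induction d with
    | zero =>
      intro v hv1 hv2 hd
      exact step_core hlam hT hU hg hcT hcU hv1 hv2 (fun w hw1 hw2 => by omega)
    | succ d ih =>
      intro v hv1 hv2 hd
      exact step_core hlam hT hU hg hcT hcU hv1 hv2
        (fun w hw1 hw2 => ih w (by omega) hw2 (by omega))
  funext p
  by_cases hp : IsCell lam p
  · have hTv := hT.2.1 p hp
    have := main (m - T p) (T p) hTv.1 hTv.2 (le_refl _)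
    have hmem : p ∈ cellsWith lam U (T p) := by rw [← this]; exact ⟨hp, rfl⟩
    exact hmem.2.symm
  · rw [hT.1 p hp, hU.1 p hp]

end Uniq
/-! ### The sorting move preserves gamma data -/

section Move

variable {n m : ℕ} {lam : ℕ → ℕ} {T : ℕ × ℕ → ℕ} {i : ℕ}

lemma path_bounds {P : List (ℕ × ℕ)} (hne : P ≠ [])
    (hchain : List.Chain' (gammaStep lam T i) P) {S E : ℕ × ℕ}
    (hheadval : P.head hne = S) (hlastval : P.getLast hne = E) :
    ∀ x ∈ P, E.1 ≤ x.1 ∧ x.1 ≤ S.1 ∧ S.2 ≤ x.2 ∧ x.2 ≤ E.2 := by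
  intro x hx
  obtain ⟨a, ha, rfl⟩ := List.mem_iff_getElem.mp hx
  have hlen : 0 < P.length := List.length_pos_iff.mpr hne
  have h0 : P[0] = S := by
    rw [← hheadval]
    exact List.getElem_zero hlen
  have hL : P[P.length - 1] = E := by
    rw [← hlastval]
    exact (List.getLast_eq_getElem hne).symm
  obtain ⟨b1, b2, -⟩ := chain_steps hchain (Nat.zero_le a) ha hlen
  obtain ⟨c1, c2, -⟩ := chain_steps hchain (by omega : a ≤ P.length - 1) (by omega) ha
  rw [h0] at b1 b2
  rw [hL] at c1 c2
  exact ⟨c1, b1, b2, c2⟩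

lemma chain_transfer {R S : ℕ × ℕ → ℕ × ℕ → Prop} {P : List (ℕ × ℕ)}
    (hc : List.Chain' R P) (h : ∀ x ∈ P, ∀ y ∈ P, R x y → S x y) :
    List.Chain' S P := by
  rw [List.Chain', List.isChain_iff_getElem] at hc ⊢
  intro a ha
  exact h _ (List.getElem_mem _) _ (List.getElem_mem _) (hc a ha)

/-- rows of cells with value i are between rtop and rbot -/
lemma cell_row_bounds (hlam : IsPartitionOf n lam) {p : ℕ × ℕ} (hp : IsCell lam p)
    {j : ℕ} (hv : T p = j) : rtop lam T j ≤ p.1 ∧ p.1 ≤ rbot lam T j :=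
  ⟨row_ge_rtop hp hv, row_le_rbot hlam hp hv⟩

/-- basic swap value facts -/
lemma swap_val_lt (hT : IsIGLT lam m T) {p : ℕ × ℕ} (hp : IsCell lam p) :
    (T p < i → swapTab lam i T p = T p) ∧
    (T p = i → swapTab lam i T p = i + 1) ∧
    (T p = i + 1 → swapTab lam i T p = i) ∧
    (i + 1 < T p → swapTab lam i T p = T p) := by
  rw [swap_cell_eq lam i T hp]
  refine ⟨?_, ?_, ?_, ?_⟩ <;> intro h <;> split_ifs <;> omega

/-- the IsGammaPath predicate transfers under the swap, value `i` block (A). -/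
lemma gpath_swap_A (hlam : IsPartitionOf n lam) (hT : IsIGLT lam m T)
    (hi1 : 1 ≤ i) (hi2 : i + 1 ≤ m) (hinv : rbot lam T (i + 1) < rtop lam T i)
    (V : Set (ℕ × ℕ)) :
    IsGammaPath lam (swapTab lam i T) (i + 1) V ↔ IsGammaPath lam T i V := by
  have hcw : cellsWith lam (swapTab lam i T) (i + 1) = cellsWith lam T i :=
    cellsWith_swap_i1 lam i T
  obtain ⟨hrb, hrt, hcb, hct⟩ := rbot_eq_of_cellsWith hcw
  have htc := top_cell hT hi1 (by omega)
  have hrt1 : 1 ≤ rtop lam T i := htc.1.1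
  -- all B cells have row ≤ rbot T (i+1) < rtop T i
  have hBrow : ∀ q : ℕ × ℕ, IsCell lam q → T q = i + 1 → q.1 < rtop lam T i := by
    intro q hq hv
    have := row_le_rbot hlam hq hv
    omega
  have hArow : ∀ q : ℕ × ℕ, IsCell lam q → T q = i → rtop lam T i ≤ q.1 :=
    fun q hq hv => row_ge_rtop hq hv
  constructor
  · -- U-path to T-path
    rintro ⟨P, hne, hhead, hlast, hchain, hVeq⟩
    refine ⟨P, hne, ?_, ?_, ?_, hVeq⟩
    · rw [hhead, hrb, hcb]
    · rw [hlast, hrt, hct]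
    · have hheadval : P.head hne = (rbot lam T i, cbot lam T i - 1) := by
        have := List.head?_eq_head hne
        rw [this, hrb, hcb] at hhead
        exact Option.some_injective _ hhead
      have hlastval : P.getLast hne = (rtop lam T i - 1, ctop lam T i) := by
        have := List.getLast?_eq_getLast hne
        rw [this, hrt, hct] at hlast
        exact Option.some_injective _ hlast
      have hbd := path_bounds hne hchain hheadval hlastval
      apply chain_transfer hchain
      intro x hx y hy hstep
      have hbx := hbd x hx
      have hby := hbd y hy
      simp only at hbx hby
      -- generic conversions
      have convGe : ∀ b : ℕ × ℕ, rtop lam T i ≤ b.1 →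
          entryGe lam (swapTab lam i T) (i + 1) b → entryGe lam T i b := by
        intro b hb hge hcell
        have := hge hcell
        rw [swap_cell_eq lam i T hcell] at this
        split_ifs at this <;> omega
      have convLtHigh : ∀ b : ℕ × ℕ, rtop lam T i ≤ b.1 →
          entryLt lam (swapTab lam i T) (i + 1) b → entryLt lam T i b := by
        intro b hb hlt
        rcases hlt with h | h | ⟨hcell, hval⟩
        · exact Or.inl h
        · exact Or.inr (Or.inl h)
        · right; right
          refine ⟨hcell, ?_⟩
          rw [swap_cell_eq lam i T hcell] at hval
          split_ifs at hval with h1 h2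
          · omega
          · -- b has value i+1, but its row is ≥ rtop: contradiction
            exfalso
            have := hBrow b hcell h2
            omega
          · omega
      rcases hstep with ⟨hp1, hq, hl, hg⟩ | ⟨hq, hl, hg⟩
      · -- up-step
        have hrowp : rtop lam T i ≤ x.1 := by
          rw [hq] at hby
          simp only at hby
          omega
        exact Or.inl ⟨hp1, hq, convLtHigh _ (by exact hrowp) hl,
          convGe _ (by simp only; omega) hg⟩
      · -- right-step
        right
        refine ⟨hq, ?_, convGe _ (by simp only; omega) hg⟩
        -- the Lt box is (x.1, x.2+1) = y; row ≥ rtop - 1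
        rcases Nat.lt_or_ge x.1 (rtop lam T i) with hrow | hrow
        · -- top row: x.1 = rtop - 1
          have hx1 : x.1 = rtop lam T i - 1 := by omega
          -- first show x.2 + 1 = ctop
          have hcol : x.2 + 1 = ctop lam T i := by
            by_contra hcol
            have hcol2 : x.2 + 1 < ctop lam T i := by
              rw [hq] at hby
              simp only at hby
              omega
            -- Ge box (rtop, x.2+1) is a cell with T value < i: contradiction
            have hcell : IsCell lam (rtop lam T i, x.2 + 1) := by
              apply cell_left hlam htc.1 (by omega) (by omega)
            have hvlt : T (rtop lam T i, x.2 + 1) < i := by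
              have := row_lt hlam hT hcell htc.1 hcol2
              rw [htc.2] at this
              exact this
            have := hg (by rw [hx1]; simpa [Nat.sub_add_cancel hrt1] using hcell)
            rw [swap_cell_eq lam i T (by rw [hx1] at *; simpa [Nat.sub_add_cancel hrt1] using hcell)] at this
            have hne1 : T (x.1 + 1, x.2 + 1) = T (rtop lam T i, x.2 + 1) := by
              rw [hx1, Nat.sub_add_cancel hrt1]
            split_ifs at this <;> omega
          -- Lt box is (rtop - 1, ctop), directly above the Top cell
          rcases hl with h | h | ⟨hcell, hval⟩
          · exact Or.inl h
          · exact Or.inr (Or.inl h)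
          · right; right
            refine ⟨hcell, ?_⟩
            rw [swap_cell_eq lam i T hcell] at hval
            split_ifs at hval with h1 h2
            · omega
            · -- value i+1 directly above the Top cell of value i: column violation
              exfalso
              have hcell2 : (x.1, x.2 + 1) = (rtop lam T i - 1, ctop lam T i) := by
                rw [hx1, hcol]
              have hcc : IsCell lam (rtop lam T i - 1, ctop lam T i) := by
                rw [← hcell2]; exact hcell
              have : T (rtop lam T i - 1, ctop lam T i) < T (rtop lam T i, ctop lam T i) := by
                apply col_lt hlam hT hcc htc.1
                omega
              rw [htc.2] at this
              rw [hcell2] at h2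
              omega
            · omega
        · exact convLtHigh _ (by simpa using hrow) hl
  · -- T-path to U-path
    rintro ⟨P, hne, hhead, hlast, hchain, hVeq⟩
    refine ⟨P, hne, ?_, ?_, ?_, hVeq⟩
    · rw [hhead, hrb, hcb]
    · rw [hlast, hrt, hct]
    · have hheadval : P.head hne = (rbot lam T i, cbot lam T i - 1) := by
        have := List.head?_eq_head hne
        rw [this] at hhead
        exact Option.some_injective _ hhead
      have hlastval : P.getLast hne = (rtop lam T i - 1, ctop lam T i) := by
        have := List.getLast?_eq_getLast hne
        rw [this] at hlast
        exact Option.some_injective _ hlast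
      have hbd := path_bounds hne hchain hheadval hlastval
      apply chain_transfer hchain
      intro x hx y hy hstep
      have hbx := hbd x hx
      have hby := hbd y hy
      simp only at hbx hby
      have convLt : ∀ b : ℕ × ℕ, entryLt lam T i b →
          entryLt lam (swapTab lam i T) (i + 1) b := by
        intro b hlt
        rcases hlt with h | h | ⟨hcell, hval⟩
        · exact Or.inl h
        · exact Or.inr (Or.inl h)
        · right; right
          refine ⟨hcell, ?_⟩
          rw [swap_cell_eq lam i T hcell]
          split_ifs <;> omega
      have convGe : ∀ b : ℕ × ℕ, rtop lam T i ≤ b.1 → entryGe lam T i b →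
          entryGe lam (swapTab lam i T) (i + 1) b := by
        intro b hb hge hcell
        have h1 := hge hcell
        rw [swap_cell_eq lam i T hcell]
        have hnotB : T b ≠ i + 1 := by
          intro hB
          have := hBrow b hcell hB
          omega
        split_ifs <;> omega
      rcases hstep with ⟨hp1, hq, hl, hg⟩ | ⟨hq, hl, hg⟩
      · exact Or.inl ⟨hp1, hq, convLt _ hl, convGe _ (by
          rw [hq] at hby; simp only at hby ⊢; omega) hg⟩
      · exact Or.inr ⟨hq, convLt _ hl, convGe _ (by
          rw [hq] at hby; simp only at hby ⊢; omega) hg⟩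

/-- the IsGammaPath predicate transfers under the swap, value `i+1` block (B). -/
lemma gpath_swap_B (hlam : IsPartitionOf n lam) (hT : IsIGLT lam m T)
    (hi1 : 1 ≤ i) (hi2 : i + 1 ≤ m) (hinv : rbot lam T (i + 1) < rtop lam T i)
    (V : Set (ℕ × ℕ)) :
    IsGammaPath lam (swapTab lam i T) i V ↔ IsGammaPath lam T (i + 1) V := by
  have hcw : cellsWith lam (swapTab lam i T) i = cellsWith lam T (i + 1) :=
    cellsWith_swap_i lam i T
  obtain ⟨hrb, hrt, hcb, hct⟩ := rbot_eq_of_cellsWith hcw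
  have hbc := bot_cell hlam hT (by omega : 1 ≤ i + 1) hi2
  have hcb1 : 1 ≤ cbot lam T (i + 1) := hbc.1.2.1
  have hrb1 : 1 ≤ rbot lam T (i + 1) := hbc.1.1
  have hArow : ∀ q : ℕ × ℕ, IsCell lam q → T q = i → rtop lam T i ≤ q.1 :=
    fun q hq hv => row_ge_rtop hq hv
  constructor
  · -- U-path (value i) to T-path (value i+1)
    rintro ⟨P, hne, hhead, hlast, hchain, hVeq⟩
    refine ⟨P, hne, ?_, ?_, ?_, hVeq⟩
    · rw [hhead, hrb, hcb]
    · rw [hlast, hrt, hct]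
    · have hheadval : P.head hne = (rbot lam T (i+1), cbot lam T (i+1) - 1) := by
        have := List.head?_eq_head hne
        rw [this, hrb, hcb] at hhead
        exact Option.some_injective _ hhead
      have hlastval : P.getLast hne = (rtop lam T (i+1) - 1, ctop lam T (i+1)) := by
        have := List.getLast?_eq_getLast hne
        rw [this, hrt, hct] at hlast
        exact Option.some_injective _ hlast
      have hbd := path_bounds hne hchain hheadval hlastval
      -- no A cell has row ≤ rbot T (i+1)
      have hnoA : ∀ b : ℕ × ℕ, IsCell lam b → b.1 ≤ rbot lam T (i + 1) → T b ≠ i := by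
        intro b hb hrow hv
        have := hArow b hb hv
        omega
      have convLt : ∀ b : ℕ × ℕ, entryLt lam (swapTab lam i T) i b →
          entryLt lam T (i + 1) b := by
        intro b hlt
        rcases hlt with h | h | ⟨hcell, hval⟩
        · exact Or.inl h
        · exact Or.inr (Or.inl h)
        · right; right
          refine ⟨hcell, ?_⟩
          rw [swap_cell_eq lam i T hcell] at hval
          split_ifs at hval <;> omega
      have convGe : ∀ b : ℕ × ℕ, b.1 ≤ rbot lam T (i + 1) →
          entryGe lam (swapTab lam i T) i b → entryGe lam T (i + 1) b := by
        intro b hrow hge hcell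
        have h1 := hge hcell
        rw [swap_cell_eq lam i T hcell] at h1
        have := hnoA b hcell hrow
        split_ifs at h1 <;> omega
      -- no right-step happens at the bottom row
      have hnobot : ∀ x ∈ P, ∀ y ∈ P, gammaStep lam (swapTab lam i T) i x y →
          y = (x.1, x.2 + 1) → x.1 < rbot lam T (i + 1) := by
        intro x hx y hy hstep hq
        rcases hstep with ⟨-, hq', -, -⟩ | ⟨-, hl, -⟩
        · -- if it were an up-step, y has different row; but both shapes given: contradiction
          exfalso
          rw [hq'] at hq
          have := congrArg Prod.snd hq
          simp only at this
          omega
        · -- right-step: examine the Lt box (x.1, x.2+1)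
          have hbx := hbd x hx
          simp only at hbx
          rcases Nat.lt_or_ge x.1 (rbot lam T (i+1)) with h | h
          · exact h
          exfalso
          have hx1 : x.1 = rbot lam T (i + 1) := by omega
          have hcol : cbot lam T (i + 1) ≤ x.2 + 1 := by omega
          rcases hl with hh | hh | ⟨hcell, hval⟩
          · simp only at hh; omega
          · simp only at hh; omega
          · -- cell (rbot(i+1), x.2+1) with U value < i
            rw [swap_cell_eq lam i T hcell] at hval
            have hcc : IsCell lam (rbot lam T (i+1), x.2 + 1) := by
              rw [← hx1]; exact hcell
            rcases Nat.eq_or_lt_of_le hcol with he | hlt2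
            · -- it is the Bot cell of value i+1: U value is i, not < i
              have : T (x.1, x.2 + 1) = i + 1 := by
                rw [hx1, ← he]; exact hbc.2
              split_ifs at hval <;> omega
            · -- strictly right of the bot cell: T value > i+1
              have : T (rbot lam T (i+1), cbot lam T (i+1)) < T (rbot lam T (i+1), x.2+1) :=
                row_lt hlam hT hbc.1 hcc hlt2
              rw [hbc.2] at this
              have h2 : T (x.1, x.2 + 1) = T (rbot lam T (i+1), x.2 + 1) := by rw [hx1]
              split_ifs at hval <;> omega
      apply chain_transfer hchain
      intro x hx y hy hstep
      have hbx := hbd x hx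
      have hby := hbd y hy
      simp only at hbx hby
      rcases hstep with ⟨hp1, hq, hl, hg⟩ | ⟨hq, hl, hg⟩
      · exact Or.inl ⟨hp1, hq, convLt _ hl, convGe _ (by simp only; omega) hg⟩
      · right
        have hxrow : x.1 < rbot lam T (i + 1) :=
          hnobot x hx y hy (Or.inr ⟨hq, hl, hg⟩) hq
        exact ⟨hq, convLt _ hl, convGe _ (by simp only; omega) hg⟩
  · -- T-path (value i+1) to U-path (value i)
    rintro ⟨P, hne, hhead, hlast, hchain, hVeq⟩
    refine ⟨P, hne, ?_, ?_, ?_, hVeq⟩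
    · rw [hhead, hrb, hcb]
    · rw [hlast, hrt, hct]
    · have hheadval : P.head hne = (rbot lam T (i+1), cbot lam T (i+1) - 1) := by
        have := List.head?_eq_head hne
        rw [this] at hhead
        exact Option.some_injective _ hhead
      have hlastval : P.getLast hne = (rtop lam T (i+1) - 1, ctop lam T (i+1)) := by
        have := List.getLast?_eq_getLast hne
        rw [this] at hlast
        exact Option.some_injective _ hlast
      have hbd := path_bounds hne hchain hheadval hlastval
      have convLt : ∀ b : ℕ × ℕ, b.1 ≤ rbot lam T (i + 1) →
          entryLt lam T (i + 1) b → entryLt lam (swapTab lam i T) i b := by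
        intro b hrow hlt
        rcases hlt with h | h | ⟨hcell, hval⟩
        · exact Or.inl h
        · exact Or.inr (Or.inl h)
        · right; right
          refine ⟨hcell, ?_⟩
          rw [swap_cell_eq lam i T hcell]
          have : T b ≠ i := by
            intro hv
            have := hArow b hcell hv
            omega
          split_ifs <;> omega
      have convGe : ∀ b : ℕ × ℕ, entryGe lam T (i + 1) b →
          entryGe lam (swapTab lam i T) i b := by
        intro b hge hcell
        have h1 := hge hcell
        rw [swap_cell_eq lam i T hcell]
        split_ifs <;> omega
      apply chain_transfer hchain
      intro x hx y hy hstep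
      have hbx := hbd x hx
      have hby := hbd y hy
      simp only at hbx hby
      rcases hstep with ⟨hp1, hq, hl, hg⟩ | ⟨hq, hl, hg⟩
      · exact Or.inl ⟨hp1, hq, convLt _ (by simp only; omega) hl, convGe _ hg⟩
      · exact Or.inr ⟨hq, convLt _ (by rw [hq] at hby; simp only at hby ⊢; omega) hl,
          convGe _ hg⟩

/-- the IsGammaPath predicate is unchanged for other values -/
lemma gpath_swap_other (hT : IsIGLT lam m T) {j : ℕ} (hjne : j ≠ i ∧ j ≠ i + 1)
    (V : Set (ℕ × ℕ)) :
    IsGammaPath lam (swapTab lam i T) j V ↔ IsGammaPath lam T j V := by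
  have hj : j ≤ i ∨ i + 2 ≤ j := by omega
  have hcw : cellsWith lam (swapTab lam i T) j = cellsWith lam T j :=
    cellsWith_swap_other lam T hjne
  obtain ⟨hrb, hrt, hcb, hct⟩ := rbot_eq_of_cellsWith hcw
  have hstep : ∀ p q, gammaStep lam (swapTab lam i T) j p q ↔ gammaStep lam T j p q := by
    intro p q
    have hLt : ∀ b : ℕ × ℕ, entryLt lam (swapTab lam i T) j b ↔ entryLt lam T j b := by
      intro b
      unfold entryLt
      constructor <;> rintro (h | h | ⟨hc, hv⟩)
      · exact Or.inl h
      · exact Or.inr (Or.inl h)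
      · exact Or.inr (Or.inr ⟨hc, (swap_lt_iff lam T hj hc).mp hv⟩)
      · exact Or.inl h
      · exact Or.inr (Or.inl h)
      · exact Or.inr (Or.inr ⟨hc, (swap_lt_iff lam T hj hc).mpr hv⟩)
    have hGe : ∀ b : ℕ × ℕ, entryGe lam (swapTab lam i T) j b ↔ entryGe lam T j b := by
      intro b
      unfold entryGe
      constructor <;> intro h hc <;> have h2 := h hc
      · by_contra hcon
        push_neg at hcon
        have := (swap_lt_iff lam T hj hc).mpr hcon
        omega
      · by_contra hcon
        push_neg at hcon
        have := (swap_lt_iff lam T hj hc).mp hcon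
        omega
    unfold gammaStep
    rw [hLt, hGe, hLt, hGe]
  constructor <;> rintro ⟨P, hne, hhead, hlast, hchain, hVeq⟩
  · refine ⟨P, hne, by rw [hhead, hrb, hcb], by rw [hlast, hrt, hct], ?_, hVeq⟩
    exact List.IsChain.imp (fun ⦃a b⦄ h => (hstep a b).mp h) hchain
  · refine ⟨P, hne, by rw [hhead, ← hrb, ← hcb], by rw [hlast, ← hrt, ← hct], ?_, hVeq⟩
    exact List.IsChain.imp (fun ⦃a b⦄ h => (hstep a b).mpr h) hchain

lemma hasMultiple_of_cellsWith {U : ℕ × ℕ → ℕ} {j k : ℕ}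
    (h : cellsWith lam T j = cellsWith lam U k) :
    hasMultiple lam T j → hasMultiple lam U k := by
  rintro ⟨p, q, hpq, hp, hq⟩
  exact ⟨p, q, hpq, h ▸ hp, h ▸ hq⟩

/-- the move preserves gamma data -/
lemma move_gammaData (hlam : IsPartitionOf n lam) (hT : IsIGLT lam m T)
    (hi1 : 1 ≤ i) (hi2 : i + 1 ≤ m) (hinv : rbot lam T (i + 1) < rtop lam T i) :
    gammaData lam (swapTab lam i T) = gammaData lam T := by
  ext d
  simp only [gammaData, Set.mem_setOf_eq]
  constructor
  · rintro ⟨j, hmul, hpath, hcells⟩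
    by_cases hji : j = i
    · rw [hji] at hmul hpath hcells
      exact ⟨i + 1, hasMultiple_of_cellsWith (cellsWith_swap_i lam i T) hmul,
        (gpath_swap_B hlam hT hi1 hi2 hinv d.1).mp hpath,
        by rw [hcells, cellsWith_swap_i]⟩
    · by_cases hji1 : j = i + 1
      · rw [hji1] at hmul hpath hcells
        exact ⟨i, hasMultiple_of_cellsWith (cellsWith_swap_i1 lam i T) hmul,
          (gpath_swap_A hlam hT hi1 hi2 hinv d.1).mp hpath,
          by rw [hcells, cellsWith_swap_i1]⟩
      · refine ⟨j, hasMultiple_of_cellsWith (cellsWith_swap_other lam T ⟨hji, hji1⟩) hmul,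
          (gpath_swap_other hT ⟨hji, hji1⟩ d.1).mp hpath,
          by rw [hcells, cellsWith_swap_other lam T ⟨hji, hji1⟩]⟩
  · rintro ⟨j, hmul, hpath, hcells⟩
    by_cases hji : j = i
    · rw [hji] at hmul hpath hcells
      exact ⟨i + 1, hasMultiple_of_cellsWith (cellsWith_swap_i1 lam i T).symm hmul,
        (gpath_swap_A hlam hT hi1 hi2 hinv d.1).mpr hpath,
        by rw [hcells, ← cellsWith_swap_i1 (lam := lam) (i := i) (T := T)]⟩
    · by_cases hji1 : j = i + 1
      · rw [hji1] at hmul hpath hcells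
        exact ⟨i, hasMultiple_of_cellsWith (cellsWith_swap_i lam i T).symm hmul,
          (gpath_swap_B hlam hT hi1 hi2 hinv d.1).mpr hpath,
          by rw [hcells, ← cellsWith_swap_i (lam := lam) (i := i) (T := T)]⟩
      · refine ⟨j, hasMultiple_of_cellsWith (cellsWith_swap_other lam T ⟨hji, hji1⟩).symm hmul,
          (gpath_swap_other hT ⟨hji, hji1⟩ d.1).mpr hpath,
          by rw [hcells, ← cellsWith_swap_other lam T ⟨hji, hji1⟩]⟩

end Move
/-! ### Existence of a source in each class, and the main theorem -/

section Final

variable {n m : ℕ} {lam : ℕ → ℕ} {T : ℕ × ℕ → ℕ}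

def gmeas (lam : ℕ → ℕ) (T : ℕ × ℕ → ℕ) (m : ℕ) : ℕ :=
  ∑ j ∈ Finset.Icc 1 m, j * rtop lam T j

lemma rtop_le_n (hlam : IsPartitionOf n lam) (hT : IsIGLT lam m T) {j : ℕ}
    (h1 : 1 ≤ j) (h2 : j ≤ m) : rtop lam T j ≤ n := by
  obtain ⟨c, hc, -⟩ := rtop_mem hT h1 h2
  exact cell_row_le hlam hc

lemma gmeas_le (hlam : IsPartitionOf n lam) (hT : IsIGLT lam m T) :
    gmeas lam T m ≤ m * (m * n) := by
  calc gmeas lam T m ≤ ∑ _j ∈ Finset.Icc 1 m, m * n := by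
        apply Finset.sum_le_sum
        intro j hj
        simp only [Finset.mem_Icc] at hj
        exact Nat.mul_le_mul hj.2 (rtop_le_n hlam hT hj.1 hj.2)
    _ ≤ m * (m * n) := by
        rw [Finset.sum_const, Nat.card_Icc, smul_eq_mul]
        have : m + 1 - 1 ≤ m := by omega
        exact Nat.mul_le_mul this (le_refl _)

lemma gmeas_lt (hlam : IsPartitionOf n lam) (hT : IsIGLT lam m T) {i : ℕ}
    (hi1 : 1 ≤ i) (hi2 : i + 1 ≤ m) (hinv : rbot lam T (i + 1) < rtop lam T i) :
    gmeas lam T m < gmeas lam (swapTab lam i T) m := by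
  have hrt_i : rtop lam (swapTab lam i T) i = rtop lam T (i + 1) :=
    (rbot_eq_of_cellsWith (cellsWith_swap_i lam i T)).2.1
  have hrt_i1 : rtop lam (swapTab lam i T) (i + 1) = rtop lam T i :=
    (rbot_eq_of_cellsWith (cellsWith_swap_i1 lam i T)).2.1
  have hother : ∀ j, j ≠ i → j ≠ i + 1 → rtop lam (swapTab lam i T) j = rtop lam T j :=
    fun j h1 h2 => (rbot_eq_of_cellsWith (cellsWith_swap_other lam T ⟨h1, h2⟩)).2.1
  have hba : rtop lam T (i + 1) < rtop lam T i := by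
    have := rtop_le_rbot hlam hT (by omega : 1 ≤ i + 1) hi2
    omega
  have hi_mem : i ∈ Finset.Icc 1 m := Finset.mem_Icc.mpr ⟨hi1, by omega⟩
  have hi1_mem : i + 1 ∈ (Finset.Icc 1 m).erase i := by
    rw [Finset.mem_erase]
    exact ⟨by omega, Finset.mem_Icc.mpr ⟨by omega, hi2⟩⟩
  have hsplit : ∀ U : ℕ × ℕ → ℕ, gmeas lam U m =
      i * rtop lam U i + ((i + 1) * rtop lam U (i + 1) +
        ∑ j ∈ ((Finset.Icc 1 m).erase i).erase (i + 1), j * rtop lam U j) := by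
    intro U
    rw [gmeas, ← Finset.add_sum_erase _ _ hi_mem, ← Finset.add_sum_erase _ _ hi1_mem]
  have hrest : ∑ j ∈ ((Finset.Icc 1 m).erase i).erase (i + 1),
      j * rtop lam (swapTab lam i T) j =
      ∑ j ∈ ((Finset.Icc 1 m).erase i).erase (i + 1), j * rtop lam T j := by
    apply Finset.sum_congr rfl
    intro j hj
    rw [Finset.mem_erase, Finset.mem_erase] at hj
    rw [hother j hj.2.1 hj.1]
  rw [hsplit T, hsplit (swapTab lam i T), hrest, hrt_i, hrt_i1]
  set a := rtop lam T i
  set b := rtop lam T (i + 1)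
  have e1 : (i + 1) * a = i * a + a := by ring
  have e2 : (i + 1) * b = i * b + b := by ring
  rw [e1, e2]
  have : i * a + i * b = i * b + i * a := by ring
  omega

/-- every class member can be pushed to a sorted member of the same class -/
lemma exists_sorted (hlam : IsPartitionOf n lam) (hm : 1 ≤ m) :
    ∀ d (T : ℕ × ℕ → ℕ), IsIGLT lam m T → m * (m * n) - gmeas lam T m ≤ d →
    ∃ S, IsIGLT lam m S ∧ gammaData lam S = gammaData lam T ∧
      (∀ i, 1 ≤ i → i + 1 ≤ m → rtop lam S i ≤ rbot lam S (i + 1)) := by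
  intro d
  induction d with
  | zero =>
    intro T hT hd
    by_cases hsorted : ∀ i, 1 ≤ i → i + 1 ≤ m → rtop lam T i ≤ rbot lam T (i + 1)
    · exact ⟨T, hT, rfl, hsorted⟩
    · exfalso
      push_neg at hsorted
      obtain ⟨i, hi1, hi2, hinv⟩ := hsorted
      have h1 := gmeas_lt hlam hT hi1 hi2 hinv
      have h2 := gmeas_le hlam (swap_IGLT hlam hT hi1 hi2 hinv)
      have h3 := gmeas_le hlam hT
      omega
  | succ d ih =>
    intro T hT hd
    by_cases hsorted : ∀ i, 1 ≤ i → i + 1 ≤ m → rtop lam T i ≤ rbot lam T (i + 1)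
    · exact ⟨T, hT, rfl, hsorted⟩
    · push_neg at hsorted
      obtain ⟨i, hi1, hi2, hinv⟩ := hsorted
      have hU : IsIGLT lam m (swapTab lam i T) := swap_IGLT hlam hT hi1 hi2 hinv
      have h1 := gmeas_lt hlam hT hi1 hi2 hinv
      obtain ⟨S, hS, hSdata, hSsort⟩ := ih (swapTab lam i T) hU (by omega)
      exact ⟨S, hS, hSdata.trans (move_gammaData hlam hT hi1 hi2 hinv), hSsort⟩

end Final

/-- Every equivalence class `E` of `∼` contains exactly one source
tableau. -/
theorem unique_source (n m : ℕ) (hn : 0 < n) (hm : 0 < m) (hmn : m ≤ n)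
    (lam : ℕ → ℕ) (hlam : IsPartitionOf n lam)
    (T₀ : ℕ × ℕ → ℕ) (hT₀ : IsIGLT lam m T₀) :
    ∃! T, IsIGLT lam m T ∧ TabEquiv lam T₀ T ∧ IsSourceTab lam m T := by
  obtain ⟨S, hS, hSdata, hSsort⟩ :=
    exists_sorted hlam hm (m * (m * n) - gmeas lam T₀ m) T₀ hT₀ (le_refl _)
  refine ⟨S, ⟨hS, hSdata.symm, (source_iff hlam hS hm).mpr hSsort⟩, ?_⟩
  rintro T ⟨hT, hTdata, hTsrc⟩
  have hg : gammaData lam T = gammaData lam S := by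
    rw [← hTdata, ← hSdata]
  exact uniq_core hlam hT hS hg ((source_iff hlam hT hm).mp hTsrc) hSsort

end Genomic
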